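/- arXiv:1901.10773 — 8 statements merged into one kernel-verified Lean document; each statement's English description precedes it below -/
import Mathlib

section
/- Every confluent countable abstract rewrite system has the cofinality property. That is, if (A,→) is an ARS such that there is a surjection from ℕ onto A and → is confluent, then for every a ∈ A there is a reduction sequence starting at a, with values in {b | a ↠ b}, that is cofinal in the restriction of (A,→) to {b | a ↠ b}. -/
open Relation Function FirstOrder

/-- Reflexive–transitive–symmetric closure (convertibility `↔*`). -/
def Conv {A : Type} (r : A → A → Prop) : A → A → Prop :=
  Relation.ReflTransGen (fun x y => r x y ∨ r y x)

/-- Confluence (CR). -/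
def Confluent {A : Type} (r : A → A → Prop) : Prop :=
  ∀ a b c, Relation.ReflTransGen r a b → Relation.ReflTransGen r a c →
    ∃ d, Relation.ReflTransGen r b d ∧ Relation.ReflTransGen r c d

/-- Local confluence (WCR). -/
def LocallyConfluent {A : Type} (r : A → A → Prop) : Prop :=
  ∀ a b c, r a b → r a c →
    ∃ d, Relation.ReflTransGen r b d ∧ Relation.ReflTransGen r c d

/-- Strong confluence (SC). -/
def StronglyConfluent {A : Type} (r : A → A → Prop) : Prop :=
  ∀ a b c, r a b → r a c →
    ∃ d, (r b d ∨ b = d) ∧ Relation.ReflTransGen r c d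

def IsNormalForm {A : Type} (r : A → A → Prop) (a : A) : Prop := ¬ ∃ b, r a b

/-- Unique normal forms (UN). -/
def UN {A : Type} (r : A → A → Prop) : Prop :=
  ∀ a b, IsNormalForm r a → IsNormalForm r b → Conv r a b → a = b

/-- Unique normal forms w.r.t. reduction (UN→). -/
def UNred {A : Type} (r : A → A → Prop) : Prop :=
  ∀ a b x, IsNormalForm r a → IsNormalForm r b →
    Relation.ReflTransGen r x a → Relation.ReflTransGen r x b → a = b

/-- Normal form property (NFP). -/
def NFP {A : Type} (r : A → A → Prop) : Prop :=
  ∀ a b, IsNormalForm r b → Conv r a b → Relation.ReflTransGen r a b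

/-- Acyclicity (AC). -/
def Acyclic {A : Type} (r : A → A → Prop) : Prop :=
  ∀ a b, Relation.TransGen r a b → a ≠ b

/-- Strong normalisation (SN): no infinite rewrite sequence. -/
def SN {A : Type} (r : A → A → Prop) : Prop :=
  ¬ ∃ f : ℕ → A, ∀ i, r (f i) (f (i + 1))

/-- Weak normalisation (WN). -/
def WN {A : Type} (r : A → A → Prop) : Prop :=
  ∀ a, ∃ b, Relation.ReflTransGen r a b ∧ IsNormalForm r b

/-- Inductive (IND). -/
def Inductive {A : Type} (r : A → A → Prop) : Prop :=
  ∀ f : ℕ → A, (∀ i, r (f i) (f (i + 1))) → ∃ a, ∀ i, Relation.ReflTransGen r (f i) a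

/-- Increasing (INC). -/
def Increasing {A : Type} (r : A → A → Prop) : Prop :=
  ∃ f : A → ℕ, ∀ a b, r a b → f a < f b

/-- A (finite or infinite) reduction sequence. -/
def IsRedSeq {A : Type} (r : A → A → Prop) (f : ℕ → A) : Prop :=
  ∀ i, r (f i) (f (i + 1)) ∨ ∀ j, i ≤ j → f j = f i

/-- Restriction of a relation to a subset. -/
def Restrict {A : Type} (r : A → A → Prop) (S : Set A) : A → A → Prop :=
  fun x y => r x y ∧ x ∈ S ∧ y ∈ S

/-- `f` is cofinal in the restriction of `(A, r)` to `S`. -/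
def CofinalIn {A : Type} (r : A → A → Prop) (S : Set A) (f : ℕ → A) : Prop :=
  ∀ b ∈ S, ∃ i, Relation.ReflTransGen (Restrict r S) b (f i)

/-- Cofinality property (CP). -/
def CP {A : Type} (r : A → A → Prop) : Prop :=
  ∀ a, ∃ f : ℕ → A, IsRedSeq r f ∧ f 0 = a ∧
    (∀ i, Relation.ReflTransGen r a (f i)) ∧
    CofinalIn r {b | Relation.ReflTransGen r a b} f

/-! First-order logic over the language with equality and one binary relation symbol. -/

/-- The `L`-structure on `A` interpreting the binary relation symbol as `r`. -/
def arsStructure (A : Type) (r : A → A → Prop) : FirstOrder.Language.order.Structure A :=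
  ⟨fun f => Empty.elim f, fun {n} R v =>
    match n, R with
    | 2, .le => r (v 0) (v 1)⟩

/-- `(A, r)` models the set of sentences `Φ`. -/
def ModelsSet (A : Type) (r : A → A → Prop) (Φ : Set (FirstOrder.Language.order.Sentence)) :
    Prop :=
  ∀ φ ∈ Φ, @FirstOrder.Language.Sentence.Realize FirstOrder.Language.order A (arsStructure A r) φ

/-- `P` is a generalised first-order property of ARSs. -/
def IsGFOP (P : ∀ A : Type, (A → A → Prop) → Prop) : Prop :=
  ∃ Φ : Set (FirstOrder.Language.order.Sentence),
    ∀ (A : Type), Nonempty A → ∀ r : A → A → Prop, (ModelsSet A r Φ ↔ P A r)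

/-- `P` is a first-order property of ARSs (definable by a single sentence). -/
def IsFOP (P : ∀ A : Type, (A → A → Prop) → Prop) : Prop :=
  ∃ φ : FirstOrder.Language.order.Sentence,
    ∀ (A : Type), Nonempty A → ∀ r : A → A → Prop,
      (@FirstOrder.Language.Sentence.Realize FirstOrder.Language.order A (arsStructure A r) φ
        ↔ P A r)

/-! Decreasing diagrams. -/

/-- Union of the relations with labels below `α`. -/
def Below {A : Type} {I : Type*} (lt : I → I → Prop) (f : I → A → A → Prop) (α : I) :
    A → A → Prop :=
  fun x y => ∃ γ, lt γ α ∧ f γ x y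

/-- Every peak `c ←_β a →_α b` joins by a decreasing elementary diagram. -/
def LocallyDecreasing {A : Type} {I : Type*} (lt : I → I → Prop) (f : I → A → A → Prop) : Prop :=
  ∀ α β a b c, f α a b → f β a c →
    ∃ b' b'' c' c'' d,
      Relation.ReflTransGen (Below lt f α) b b' ∧
      (f β b' b'' ∨ b' = b'') ∧
      Relation.ReflTransGen (fun x y => Below lt f α x y ∨ Below lt f β x y) b'' d ∧
      Relation.ReflTransGen (Below lt f β) c c' ∧
      (f α c' c'' ∨ c' = c'') ∧
      Relation.ReflTransGen (fun x y => Below lt f α x y ∨ Below lt f β x y) c'' d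

/-- Decreasing Church–Rosser with label set the ordinals below `α`. -/
def DCRord (α : Ordinal.{0}) {A : Type} (r : A → A → Prop) : Prop :=
  ∃ f : {β : Ordinal // β < α} → A → A → Prop,
    (∀ x y, r x y ↔ ∃ i, f i x y) ∧
    LocallyDecreasing (fun i j => i.val < j.val) f

/-- Decreasing Church–Rosser (for some ordinal label set). -/
def DCR {A : Type} (r : A → A → Prop) : Prop := ∃ α, DCRord α r

/-- Decreasing commutation: every peak `c ←_β a ⇝_α b` joins decreasingly. -/
def DCommuting {A : Type} {I : Type*} (lt : I → I → Prop) (f g : I → A → A → Prop) : Prop :=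
  ∀ α β a b c, g α a b → f β a c →
    ∃ b' b'' c' c'' d,
      Relation.ReflTransGen (Below lt f α) b b' ∧
      (f β b' b'' ∨ b' = b'') ∧
      Relation.ReflTransGen (fun x y => Below lt f α x y ∨ Below lt f β x y) b'' d ∧
      Relation.ReflTransGen (Below lt g β) c c' ∧
      (g α c' c'' ∨ c' = c'') ∧
      Relation.ReflTransGen (fun x y => Below lt g α x y ∨ Below lt g β x y) c'' d

/-- Decreasing commutation with label set the ordinals below `α` (the class `DC_α`). -/
def DCord (α : Ordinal.{0}) {A : Type} (r s : A → A → Prop) : Prop :=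
  ∃ f g : {β : Ordinal // β < α} → A → A → Prop,
    (∀ x y, r x y ↔ ∃ i, f i x y) ∧
    (∀ x y, s x y ↔ ∃ i, g i x y) ∧
    DCommuting (fun i j => i.val < j.val) f g

namespace Stmt0Aux
open Classical

variable {A : Type} (r : A → A → Prop)

/-- `PathTo r x t y` : the list `t` is a step-by-step `r`-path from `x` to `y`. -/
def PathTo : A → List A → A → Prop
  | x, [], y => x = y
  | x, z :: t, y => r x z ∧ PathTo z t y

theorem pathTo_of_rtg {x y : A} (h : Relation.ReflTransGen r x y) :
    ∃ t, PathTo r x t y := by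
  induction h using Relation.ReflTransGen.head_induction_on with
  | refl => exact ⟨[], rfl⟩
  | head hxz _ ih =>
    obtain ⟨t, ht⟩ := ih
    exact ⟨_ :: t, hxz, ht⟩

variable (l : ℕ → List A)

open Classical in
/-- One step of the flattening machine. -/
noncomputable def step (s : A × ℕ × List A) : A × ℕ × List A :=
  match s with
  | (_, n, y :: t) => (y, n, t)
  | (x, n, []) =>
    if h : ∃ m, l (n + 1 + m) ≠ [] then
      match l (n + 1 + Nat.find h) with
      | [] => (x, n, [])
      | y :: t => (y, n + 1 + Nat.find h, t)
    else (x, n, [])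

noncomputable def F (s0 : A × ℕ × List A) : ℕ → A × ℕ × List A
  | 0 => s0
  | i + 1 => step l (F s0 i)

variable (d : ℕ → A)

def Inv (s : A × ℕ × List A) : Prop := PathTo r s.1 s.2.2 (d (s.2.1 + 1))

theorem dchain (hd : ∀ m, PathTo r (d m) (l m) (d (m + 1))) (n : ℕ) : ∀ k, (∀ j, j < k → l (n + 1 + j) = []) → d (n + 1) = d (n + 1 + k) := by
  intro k
  induction k with
  | zero => intro _; rfl
  | succ k ih =>
    intro h
    have h1 : d (n + 1) = d (n + 1 + k) := ih fun j hj => h j (Nat.lt_succ_of_lt hj)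
    have h2 : l (n + 1 + k) = [] := h k (Nat.lt_succ_self k)
    have h3 := hd (n + 1 + k)
    rw [h2] at h3
    have h4 : d (n + 1 + k) = d (n + 1 + k + 1) := h3
    rw [h1, h4]
    rfl

theorem step_spec (hd : ∀ m, PathTo r (d m) (l m) (d (m + 1))) (s : A × ℕ × List A) (hs : Inv r d s) :
    Inv r d (step l s) ∧ (r s.1 (step l s).1 ∨ step l s = s) := by
  obtain ⟨x, n, t⟩ := s
  cases t with
  | cons y t =>
    obtain ⟨hxy, hpath⟩ := hs
    exact ⟨hpath, Or.inl hxy⟩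
  | nil =>
    have hx : x = d (n + 1) := hs
    by_cases h : ∃ m, l (n + 1 + m) ≠ []
    · have hstep : step l (x, n, ([] : List A)) =
        match l (n + 1 + Nat.find h) with
        | [] => (x, n, [])
        | y :: t => (y, n + 1 + Nat.find h, t) := by
        simp only [step, dif_pos h]
      have hne : l (n + 1 + Nat.find h) ≠ [] := Nat.find_spec h
      obtain ⟨y, t, hyt⟩ := List.exists_cons_of_ne_nil hne
      rw [hyt] at hstep
      have hdeq : d (n + 1) = d (n + 1 + Nat.find h) :=
        dchain r l d hd n (Nat.find h) fun j hj => by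
          have := Nat.find_min h hj
          simpa using this
      have hpath := hd (n + 1 + Nat.find h)
      rw [hyt] at hpath
      obtain ⟨hry, hp⟩ := hpath
      rw [hstep]
      refine ⟨hp, Or.inl ?_⟩
      rw [hx, hdeq]
      exact hry
    · have hstep : step l (x, n, ([] : List A)) = (x, n, []) := by
        simp only [step, dif_neg h]
      rw [hstep]
      exact ⟨hs, Or.inr rfl⟩

theorem inv_F (hd : ∀ m, PathTo r (d m) (l m) (d (m + 1)))
    (s0 : A × ℕ × List A) (hs0 : Inv r d s0) : ∀ i, Inv r d (F l s0 i) := by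
  intro i
  induction i with
  | zero => exact hs0
  | succ i ih => exact (step_spec r l d hd (F l s0 i) ih).1

theorem F_stable (s0 : A × ℕ × List A) {i : ℕ} (h : step l (F l s0 i) = F l s0 i) :
    ∀ j, i ≤ j → F l s0 j = F l s0 i := by
  intro j hij
  induction j with
  | zero => cases Nat.le_zero.mp hij; rfl
  | succ j ih =>
    rcases Nat.lt_or_ge i (j + 1) with hlt | hge
    · have hij' : i ≤ j := Nat.lt_succ_iff.mp hlt
      have := ih hij'
      show step l (F l s0 j) = F l s0 i
      rw [this, h]
    · have : i = j + 1 := by omega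
      rw [this]

theorem lemA (hd : ∀ m, PathTo r (d m) (l m) (d (m + 1)))
    (s0 : A × ℕ × List A) (hs0 : Inv r d s0) : ∀ (t : List A) (i x n), F l s0 i = (x, n, t) →
    ∃ j, F l s0 j = (d (n + 1), n, []) := by
  intro t
  induction t with
  | nil =>
    intro i x n hi
    have hinv := inv_F r l d hd s0 hs0 i
    rw [hi] at hinv
    have hx : x = d (n + 1) := hinv
    exact ⟨i, by rw [hi, hx]⟩
  | cons y t ih =>
    intro i x n hi
    have : F l s0 (i + 1) = (y, n, t) := by
      show step l (F l s0 i) = (y, n, t)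
      rw [hi]
      rfl
    exact ih (i + 1) y n this

theorem lemD (hd : ∀ m, PathTo r (d m) (l m) (d (m + 1)))
    (s0 : A × ℕ × List A) (hs0 : Inv r d s0) : ∀ (k n i x), F l s0 i = (x, n, []) →
    ∃ j, (F l s0 j).1 = d (n + 1 + k) := by
  intro k
  induction k using Nat.strong_induction_on with
  | _ k ihk =>
    intro n i x hi
    have hinv := inv_F r l d hd s0 hs0 i
    rw [hi] at hinv
    have hx : x = d (n + 1) := hinv
    by_cases h : ∃ m, l (n + 1 + m) ≠ []
    · rcases le_or_gt k (Nat.find h) with hk | hk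
      · -- d (n+1+k) = d (n+1) = x
        have : d (n + 1) = d (n + 1 + k) :=
          dchain r l d hd n k fun j hj => by
            have := Nat.find_min h (lt_of_lt_of_le hj hk)
            simpa using this
        exact ⟨i, by rw [hi]; simp [hx, this]⟩
      · -- jump
        have hne : l (n + 1 + Nat.find h) ≠ [] := Nat.find_spec h
        obtain ⟨y, t, hyt⟩ := List.exists_cons_of_ne_nil hne
        have hstep : F l s0 (i + 1) = (y, n + 1 + Nat.find h, t) := by
          show step l (F l s0 i) = _
          rw [hi]
          simp only [step, dif_pos h, hyt]
        obtain ⟨j, hj⟩ := lemA r l d hd s0 hs0 t (i + 1) y (n + 1 + Nat.find h) hstep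
        have hk' : k - Nat.find h - 1 < k := by omega
        obtain ⟨j', hj'⟩ := ihk (k - Nat.find h - 1) hk' (n + 1 + Nat.find h) j _ hj
        refine ⟨j', ?_⟩
        rw [hj']
        congr 1
        omega
    · -- all later segments empty
      push_neg at h
      have : d (n + 1) = d (n + 1 + k) :=
        dchain r l d hd n k fun j _ => h j
      exact ⟨i, by rw [hi]; simp [hx, this]⟩

end Stmt0Aux

/-- Flattening: a chain of finite reductions gives a reduction sequence hitting every milestone. -/
theorem flatten {A : Type} (r : A → A → Prop) (d : ℕ → A)
    (hd : ∀ n, Relation.ReflTransGen r (d n) (d (n + 1))) :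
    ∃ f : ℕ → A, IsRedSeq r f ∧ f 0 = d 0 ∧ (∀ m, ∃ j, f j = d m) := by
  classical
  choose l hl using fun n => Stmt0Aux.pathTo_of_rtg r (hd n)
  set s0 : A × ℕ × List A := (d 0, 0, l 0) with hs0def
  have hs0 : Stmt0Aux.Inv r d s0 := hl 0
  refine ⟨fun i => (Stmt0Aux.F l s0 i).1, ?_, rfl, ?_⟩
  · intro i
    rcases (Stmt0Aux.step_spec r l d hl (Stmt0Aux.F l s0 i)
      (Stmt0Aux.inv_F r l d hl s0 hs0 i)).2 with hr | heq
    · exact Or.inl hr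
    · right
      intro j hij
      show (Stmt0Aux.F l s0 j).1 = (Stmt0Aux.F l s0 i).1
      rw [Stmt0Aux.F_stable l s0 heq j hij]
  · intro m
    cases m with
    | zero => exact ⟨0, rfl⟩
    | succ m =>
      obtain ⟨j, hj⟩ := Stmt0Aux.lemA r l d hl s0 hs0 (l 0) 0 (d 0) 0 rfl
      obtain ⟨j', hj'⟩ := Stmt0Aux.lemD r l d hl s0 hs0 m 0 j _ hj
      refine ⟨j', ?_⟩
      show (Stmt0Aux.F l s0 j').1 = d (m + 1)
      rw [hj']
      congr 1
      omega

/-- Every confluent countable ARS has the cofinality property. -/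
theorem stmt0 (A : Type) (hA : Nonempty A) (r : A → A → Prop)
    (hcount : ∃ g : ℕ → A, Function.Surjective g)
    (hconf : Confluent r) : CP r := by
  classical
  obtain ⟨g, hg⟩ := hcount
  intro a
  -- construct the next-milestone function
  have hnext : ∀ x : A, Relation.ReflTransGen r a x → ∀ n : ℕ,
      ∃ y, Relation.ReflTransGen r a y ∧ Relation.ReflTransGen r x y ∧
        (Relation.ReflTransGen r a (g n) → Relation.ReflTransGen r (g n) y) := by
    intro x hx n
    by_cases h : Relation.ReflTransGen r a (g n)
    · obtain ⟨e, he1, he2⟩ := hconf a x (g n) hx h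
      exact ⟨e, hx.trans he1, he1, fun _ => he2⟩
    · exact ⟨x, hx, Relation.ReflTransGen.refl, fun h' => absurd h' h⟩
  choose next hnext1 hnext2 hnext3 using hnext
  -- milestones
  let D : ℕ → {x : A // Relation.ReflTransGen r a x} := fun n =>
    Nat.rec ⟨a, Relation.ReflTransGen.refl⟩
      (fun n p => ⟨next p.1 p.2 n, hnext1 p.1 p.2 n⟩) n
  set d : ℕ → A := fun n => (D n).1 with hddef
  have hd0 : d 0 = a := rfl
  have hda : ∀ n, Relation.ReflTransGen r a (d n) := fun n => (D n).2
  have hdstep : ∀ n, Relation.ReflTransGen r (d n) (d (n + 1)) := fun n =>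
    hnext2 (D n).1 (D n).2 n
  have hdg : ∀ n, Relation.ReflTransGen r a (g n) →
      Relation.ReflTransGen r (g n) (d (n + 1)) := fun n =>
    hnext3 (D n).1 (D n).2 n
  -- flatten milestones into a reduction sequence
  obtain ⟨f, hseq, hf0, hhit⟩ := flatten r d hdstep
  have hfa : ∀ i, Relation.ReflTransGen r a (f i) := by
    intro i
    induction i with
    | zero => rw [hf0, hd0]
    | succ i ih =>
      rcases hseq i with hr | heq
      · exact ih.tail hr
      · rw [heq (i + 1) (Nat.le_succ i)]
        exact ih
  -- lifting to the restricted relation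
  have hlift : ∀ x y : A, Relation.ReflTransGen r a x → Relation.ReflTransGen r x y →
      Relation.ReflTransGen (Restrict r {b | Relation.ReflTransGen r a b}) x y := by
    intro x y hax hxy
    induction hxy with
    | refl => exact Relation.ReflTransGen.refl
    | tail hxb hbc ih =>
      exact ih.tail ⟨hbc, hax.trans hxb, (hax.trans hxb).tail hbc⟩
  refine ⟨f, hseq, by rw [hf0, hd0], hfa, ?_⟩
  intro b hb
  obtain ⟨n, rfl⟩ := hg b
  have hgd : Relation.ReflTransGen r (g n) (d (n + 1)) := hdg n hb
  obtain ⟨j, hj⟩ := hhit (n + 1)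
  exact ⟨j, by rw [hj]; exact hlift (g n) (d (n + 1)) hb hgd⟩
end

section
/- None of the properties CR, ¬CR, WCR and ¬WCR is a generalised first-order property: there is no set Φ of L-sentences such that an ARS satisfies Φ if and only if it is confluent (respectively, not confluent, locally confluent, not locally confluent). -/
open Relation Function FirstOrder

/-! ### Auxiliary development for `stmt7` -/

abbrev AuxA : Type := ℕ × ℕ × ℕ

def auxr : AuxA → AuxA → Prop
  | (n, s, k), (n', s', k') => n' = n ∧ (
      (s = 0 ∧ k = 0 ∧ (s' = 1 ∨ s' = 2) ∧ k' = 0) ∨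
      ((s = 1 ∨ s = 2) ∧ k < n ∧ s' = s ∧ k' = k + 1) ∨
      ((s = 1 ∨ s = 2) ∧ k = n ∧ s' = 3 ∧ k' = 0))

lemma auxr_comp {x y : AuxA} (h : auxr x y) : y.1 = x.1 := by
  obtain ⟨n, s, k⟩ := x; obtain ⟨n', s', k'⟩ := y; exact h.1

lemma aux_chain_reach : ∀ (m n s k : ℕ), (s = 1 ∨ s = 2) → k ≤ n → n - k = m →
    ReflTransGen auxr (n, s, k) (n, 3, 0) := by
  intro m
  induction m with
  | zero =>
    intro n s k hs hk h0
    have hkn : k = n := by omega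
    subst hkn
    exact ReflTransGen.single ⟨rfl, Or.inr (Or.inr ⟨hs, rfl, rfl, rfl⟩)⟩
  | succ m ih =>
    intro n s k hs hk h
    have hkn : k < n := by omega
    exact ReflTransGen.head ⟨rfl, Or.inr (Or.inl ⟨hs, hkn, rfl, rfl⟩)⟩
      (ih n s (k + 1) hs (by omega) (by omega))

lemma aux_reach_top_of_step {x y : AuxA} (h : auxr x y) :
    ReflTransGen auxr y (y.1, 3, 0) := by
  obtain ⟨n, s, k⟩ := x; obtain ⟨n', s', k'⟩ := y
  obtain ⟨rfl, hc⟩ := h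
  rcases hc with ⟨_, _, hs', rfl⟩ | ⟨hs, hk, hss, hkk⟩ | ⟨_, _, hss, hkk⟩
  · exact aux_chain_reach n' n' s' 0 hs' (Nat.zero_le _) rfl
  · rw [hss, hkk]
    exact aux_chain_reach (n' - (k + 1)) n' s (k + 1) hs (by omega) rfl
  · rw [hss, hkk]

lemma aux_rt_comp {a b : AuxA} (h : ReflTransGen auxr a b) : b.1 = a.1 := by
  induction h with
  | refl => rfl
  | tail _ hstep ih => rw [auxr_comp hstep, ih]

lemma aux_rt_top {a b : AuxA} (h : ReflTransGen auxr a b) :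
    b = a ∨ ReflTransGen auxr b (a.1, 3, 0) := by
  induction h with
  | refl => exact Or.inl rfl
  | tail hab hstep ih =>
    right
    have := aux_reach_top_of_step hstep
    rwa [auxr_comp hstep, aux_rt_comp hab] at this

theorem auxr_confluent : Confluent auxr := by
  intro a b c hb hc
  rcases aux_rt_top hb with heb | hbt
  · rcases aux_rt_top hc with hec | hct
    · exact ⟨a, by rw [heb], by rw [hec]⟩
    · exact ⟨(a.1, 3, 0), by rw [heb]; exact hc.trans hct, hct⟩
  · rcases aux_rt_top hc with hec | hct
    · exact ⟨(a.1, 3, 0), hbt, by rw [hec]; exact hb.trans hbt⟩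
    · exact ⟨(a.1, 3, 0), hbt, hct⟩

lemma auxr_chain_step {n s k : ℕ} {y : AuxA} (hs : s = 1 ∨ s = 2) (hk : k < n)
    (h : auxr (n, s, k) y) : y = (n, s, k + 1) := by
  obtain ⟨n', s', k'⟩ := y
  obtain ⟨rfl, hc⟩ := h
  rcases hc with ⟨h0, _⟩ | ⟨_, _, rfl, rfl⟩ | ⟨_, hkn, _, _⟩
  · omega
  · rfl
  · omega

/-- `k`-fold composition of `auxr`. -/
def auxStepN : ℕ → AuxA → AuxA → Prop
  | 0, x, y => y = x
  | (k+1), x, y => ∃ z, auxStepN k x z ∧ auxr z y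

lemma auxStepN_chain : ∀ (i n s : ℕ) (x : AuxA), (s = 1 ∨ s = 2) → i ≤ n →
    auxStepN i (n, s, 0) x → x = (n, s, i) := by
  intro i
  induction i with
  | zero => intro n s x _ _ h; exact h
  | succ i ih =>
    intro n s x hs hi h
    obtain ⟨z, hz, hr⟩ := h
    have := ih n s z hs (by omega) hz
    subst this
    exact auxr_chain_step hs (by omega) hr

/-! The ultrapower of `(AuxA, auxr)` over the hyperfilter on `ℕ`. -/

instance instAuxA : FirstOrder.Language.order.Structure AuxA := arsStructure AuxA auxr

abbrev NN : Type := (↑(Filter.hyperfilter ℕ) : Filter ℕ).Product (fun _ : ℕ => AuxA)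

noncomputable def mkN (f : ℕ → AuxA) : NN := Quotient.mk (Filter.productSetoid _ _) f

def ss : NN → NN → Prop := fun x y =>
  Language.Structure.RelMap (L := Language.order) (Language.orderRel.le) ![x, y]

lemma ss_mk (f g : ℕ → AuxA) :
    ss (mkN f) (mkN g) ↔ ∀ᶠ n in (Filter.hyperfilter ℕ : Filter ℕ), auxr (f n) (g n) := by
  have h : (![mkN f, mkN g] : Fin 2 → NN) =
      fun i => Quotient.mk (Filter.productSetoid _ _) ((![f, g] : Fin 2 → (ℕ → AuxA)) i) := by
    funext i; fin_cases i <;> rfl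
  unfold ss
  rw [h]
  exact (Language.relMap_quotient_mk' (Filter.productSetoid _ _) (L := Language.order)
    (r := (Language.orderRel.le : Language.order.Relations 2)) (x := ![f, g])).trans Iff.rfl

lemma exists_mkN (X : NN) : ∃ f, X = mkN f := by
  obtain ⟨f, hf⟩ := Quotient.exists_rep X
  exact ⟨f, hf.symm⟩

lemma mkN_eq {f g : ℕ → AuxA} (h : mkN f = mkN g) :
    ∀ᶠ n in (Filter.hyperfilter ℕ : Filter ℕ), f n = g n :=
  Quotient.exact h

lemma rt_steps {X Y : NN} (h : ReflTransGen ss X Y) :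
    ∃ (k : ℕ) (f g : ℕ → AuxA), X = mkN f ∧ Y = mkN g ∧
      ∀ᶠ n in (Filter.hyperfilter ℕ : Filter ℕ), auxStepN k (f n) (g n) := by
  induction h with
  | refl =>
    obtain ⟨f, hf⟩ := exists_mkN X
    exact ⟨0, f, f, hf, hf, Filter.Eventually.of_forall fun n => rfl⟩
  | @tail Y' Z hXY hYZ ih =>
    obtain ⟨k, f, g, hX, hY, hev⟩ := ih
    obtain ⟨h', hh⟩ := exists_mkN Z
    rw [hY, hh] at hYZ
    have hrr := (ss_mk g h').mp hYZ
    exact ⟨k + 1, f, h', hX, hh,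
      (hev.and hrr).mono fun n ⟨h1, h2⟩ => ⟨g n, h1, h2⟩⟩

lemma not_lc_ss : ¬ LocallyConfluent ss := by
  intro h
  have h1 : ss (mkN fun n => (n, 0, 0)) (mkN fun n => (n, 1, 0)) :=
    (ss_mk _ _).mpr (Filter.Eventually.of_forall fun n =>
      ⟨rfl, Or.inl ⟨rfl, rfl, Or.inl rfl, rfl⟩⟩)
  have h2 : ss (mkN fun n => (n, 0, 0)) (mkN fun n => (n, 2, 0)) :=
    (ss_mk _ _).mpr (Filter.Eventually.of_forall fun n =>
      ⟨rfl, Or.inl ⟨rfl, rfl, Or.inr rfl, rfl⟩⟩)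
  obtain ⟨d, hbd, hcd⟩ := h _ _ _ h1 h2
  obtain ⟨k, f, g, hB, hd1, hev1⟩ := rt_steps hbd
  obtain ⟨j, f', g', hC, hd2, hev2⟩ := rt_steps hcd
  have e1 := mkN_eq hB
  have e2 := mkN_eq hC
  have e3 := mkN_eq (hd1.symm.trans hd2)
  have hbig : ∀ᶠ n in (Filter.hyperfilter ℕ : Filter ℕ), k ≤ n ∧ j ≤ n :=
    Nat.hyperfilter_le_atTop
      ((Filter.eventually_ge_atTop k).and (Filter.eventually_ge_atTop j))
  obtain ⟨n, hs1, hs2, he1, he2, he3, hk, hj⟩ :=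
    (hev1.and (hev2.and (e1.and (e2.and (e3.and hbig))))).exists
  rw [← he1] at hs1
  rw [← he2] at hs2
  have hg : g n = (n, 1, k) := auxStepN_chain k n 1 (g n) (Or.inl rfl) hk hs1
  have hg' : g' n = (n, 2, j) := auxStepN_chain j n 2 (g' n) (Or.inr rfl) hj hs2
  rw [hg, hg'] at he3
  simp [Prod.ext_iff] at he3

lemma order_structure_ext {X : Type} (S T : Language.order.Structure X)
    (h : ∀ v : Fin 2 → X,
      @Language.Structure.RelMap _ _ S 2 Language.orderRel.le v ↔
      @Language.Structure.RelMap _ _ T 2 Language.orderRel.le v) : S = T := by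
  rcases S with ⟨Sf, Sr⟩
  rcases T with ⟨Tf, Tr⟩
  congr
  · funext n f v
    exact isEmptyElim f
  · funext n R v
    cases R
    exact propext (h v)

lemma struct_eq : arsStructure NN ss = (inferInstance : Language.order.Structure NN) := by
  apply order_structure_ext
  intro v
  have hv : v = ![v 0, v 1] := by funext i; fin_cases i <;> rfl
  constructor
  · intro hs
    rw [hv]
    exact hs
  · intro hs
    rw [hv] at hs
    exact hs

lemma realize_transfer (φ : Language.order.Sentence) :
    (@Language.Sentence.Realize Language.order AuxA (arsStructure AuxA auxr) φ) ↔
      (@Language.Sentence.Realize Language.order NN (arsStructure NN ss) φ) := by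
  rw [struct_eq]
  rw [show (@Language.Sentence.Realize Language.order NN inferInstance φ) ↔
      ∀ᶠ _ in (↑(Filter.hyperfilter ℕ) : Filter ℕ), AuxA ⊨ φ from
    Language.Ultraproduct.sentence_realize φ]
  exact (Filter.eventually_const).symm

lemma not_gfop (P : ∀ A : Type, (A → A → Prop) → Prop)
    (hP : ¬ (P AuxA auxr ↔ P NN ss)) : ¬ IsGFOP P := by
  rintro ⟨Φ, hΦ⟩
  apply hP
  rw [← hΦ AuxA ⟨(0, 0, 0)⟩ auxr, ← hΦ NN inferInstance ss]
  exact ⟨fun hm φ hφ => (realize_transfer φ).mp (hm φ hφ),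
         fun hm φ hφ => (realize_transfer φ).mpr (hm φ hφ)⟩

/-- none of CR, ¬CR, WCR, ¬WCR is a generalised first-order property. -/
theorem stmt7 :
    ¬ IsGFOP (fun A r => Confluent r) ∧
    ¬ IsGFOP (fun A r => ¬ Confluent r) ∧
    ¬ IsGFOP (fun A r => LocallyConfluent r) ∧
    ¬ IsGFOP (fun A r => ¬ LocallyConfluent r) := by
  have hCR : Confluent auxr := auxr_confluent
  have hLC : LocallyConfluent auxr := fun a b c hb hc =>
    hCR a b c (ReflTransGen.single hb) (ReflTransGen.single hc)
  have hnLC : ¬ LocallyConfluent ss := not_lc_ss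
  have hnCR : ¬ Confluent ss := fun h => hnLC (fun a b c hb hc =>
    h a b c (ReflTransGen.single hb) (ReflTransGen.single hc))
  refine ⟨not_gfop _ ?_, not_gfop _ ?_, not_gfop _ ?_, not_gfop _ ?_⟩
  · exact fun hiff => hnCR (hiff.mp hCR)
  · exact fun hiff => (hiff.mpr hnCR) hCR
  · exact fun hiff => hnLC (hiff.mp hLC)
  · exact fun hiff => (hiff.mpr hnLC) hLC
end

section
/- None of the properties NFP, CP and ¬CP is a generalised first-order property: there is no set Φ of L-sentences such that an ARS satisfies Φ if and only if it has the normal form property (respectively, has the cofinality property, fails the cofinality property). -/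
open Relation Function FirstOrder

namespace S8

noncomputable abbrev U : Ultrafilter ℕ := Filter.hyperfilter ℕ

def UProd (A : Type) : Type := (U : Filter ℕ).Product (fun _ : ℕ => A)

noncomputable def mkU {A : Type} (f : ℕ → A) : UProd A :=
  @Quotient.mk' _ ((U : Filter ℕ).productSetoid (fun _ : ℕ => A)) f

noncomputable def ultraStruct (A : Type) (r : ℕ → A → A → Prop) :
    FirstOrder.Language.order.Structure (UProd A) :=
  @FirstOrder.Language.Ultraproduct.structure ℕ (fun _ : ℕ => A) U
    FirstOrder.Language.order (fun n => arsStructure A (r n))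

noncomputable def URel {A : Type} (r : ℕ → A → A → Prop) : UProd A → UProd A → Prop :=
  fun x y => @FirstOrder.Language.Structure.RelMap _ _ (ultraStruct A r) 2 .le ![x, y]

theorem urel_mk {A : Type} (r : ℕ → A → A → Prop) (f g : ℕ → A) :
    URel r (mkU f) (mkU g) ↔ ∀ᶠ n in (U : Filter ℕ), r n (f n) (g n) := by
  letI ps := @FirstOrder.Language.Ultraproduct.setoidPrestructure ℕ (fun _ : ℕ => A) U
    FirstOrder.Language.order (fun n => arsStructure A (r n))
  have h : (![mkU f, mkU g] : Fin 2 → UProd A)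
      = fun i => (⟦(![f, g] : Fin 2 → (ℕ → A)) i⟧ :
        Quotient ((U : Filter ℕ).productSetoid (fun _ : ℕ => A))) := by
    funext i
    fin_cases i <;> rfl
  show @FirstOrder.Language.Structure.RelMap _ _ (ultraStruct A r) 2 .le ![mkU f, mkU g] ↔ _
  rw [h]
  exact @FirstOrder.Language.relMap_quotient_mk' FirstOrder.Language.order _
    ((U : Filter ℕ).productSetoid (fun _ : ℕ => A)) ps 2 .le ![f, g]

theorem mkU_out {A : Type} (x : UProd A) : mkU (Quotient.out x) = x :=
  Quotient.out_eq x

theorem mkU_eq {A : Type} {f g : ℕ → A} (h : ∀ᶠ n in (U : Filter ℕ), f n = g n) :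
    mkU f = mkU g :=
  Quotient.sound h

theorem mkU_exact {A : Type} {f g : ℕ → A} (h : mkU f = mkU g) :
    ∀ᶠ n in (U : Filter ℕ), f n = g n :=
  Quotient.exact h

theorem order_structure_ext {X : Type} (S T : FirstOrder.Language.order.Structure X)
    (h : ∀ v : Fin 2 → X,
      (@FirstOrder.Language.Structure.RelMap _ _ S 2 .le v)
        = (@FirstOrder.Language.Structure.RelMap _ _ T 2 .le v)) :
    S = T := by
  rcases S with ⟨Sf, Sr⟩
  rcases T with ⟨Tf, Tr⟩
  congr 1
  · funext n f v
    exact Empty.elim f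
  · funext n R v
    match n, R with
    | 2, .le => exact h v

theorem struct_eq (A : Type) (r : ℕ → A → A → Prop) :
    arsStructure (UProd A) (URel r) = ultraStruct A r := by
  apply order_structure_ext
  intro v
  show URel r (v 0) (v 1) = _
  have hv : v = ![v 0, v 1] := by funext i; fin_cases i <;> rfl
  conv_rhs => rw [hv]
  rfl

theorem modelsSet_ultra (A : Type) [Nonempty A] (r : ℕ → A → A → Prop)
    (Φ : Set (FirstOrder.Language.order.Sentence)) :
    ModelsSet (UProd A) (URel r) Φ ↔
      ∀ φ ∈ Φ, ∀ᶠ n in (U : Filter ℕ),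
        @FirstOrder.Language.Sentence.Realize FirstOrder.Language.order A
          (arsStructure A (r n)) φ := by
  unfold ModelsSet
  refine forall₂_congr fun φ _ => ?_
  rw [struct_eq A r]
  exact @FirstOrder.Language.Ultraproduct.sentence_realize ℕ (fun _ : ℕ => A) U
    FirstOrder.Language.order (fun n => arsStructure A (r n)) (fun _ => ‹Nonempty A›) φ

theorem not_gfop_var (P : ∀ A : Type, (A → A → Prop) → Prop) (A : Type) [Nonempty A]
    (r : ℕ → A → A → Prop) (hall : ∀ n, P A (r n)) (hnot : ¬ P (UProd A) (URel r)) :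
    ¬ IsGFOP P := by
  rintro ⟨Φ, hΦ⟩
  apply hnot
  have hU : Nonempty (UProd A) := ⟨mkU fun _ => Classical.arbitrary A⟩
  refine (hΦ (UProd A) hU (URel r)).1 ?_
  rw [modelsSet_ultra]
  intro φ hφ
  exact Filter.Eventually.of_forall fun n => (hΦ A ‹_› (r n)).2 (hall n) φ hφ

theorem not_gfop_const (P : ∀ A : Type, (A → A → Prop) → Prop) (A : Type) [Nonempty A]
    (r0 : A → A → Prop) (hA : ¬ P A r0) (hU : P (UProd A) (URel fun _ => r0)) :
    ¬ IsGFOP P := by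
  rintro ⟨Φ, hΦ⟩
  apply hA
  refine (hΦ A ‹_› r0).1 ?_
  intro φ hφ
  have hne : Nonempty (UProd A) := ⟨mkU fun _ => Classical.arbitrary A⟩
  have hm : ModelsSet (UProd A) (URel fun _ => r0) Φ :=
    (hΦ (UProd A) hne (URel fun _ => r0)).2 hU
  have hev := (modelsSet_ultra A (fun _ => r0) Φ).1 hm φ hφ
  obtain ⟨n, hn⟩ := hev.exists
  exact hn

/-! ### CP for `(ℕ, <)` -/

theorem rtg_lt_of_le {a b : ℕ} (h : a ≤ b) : Relation.ReflTransGen (· < ·) a b := by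
  rcases Nat.lt_or_ge a b with h' | h'
  · exact Relation.ReflTransGen.single h'
  · have : a = b := le_antisymm h h'
    exact this ▸ Relation.ReflTransGen.refl

theorem cp_nat : CP (· < · : ℕ → ℕ → Prop) := by
  intro a
  refine ⟨fun i => a + i, fun i => Or.inl ?_, by simp, fun i => rtg_lt_of_le ?_, ?_⟩
  · show a + i < a + (i + 1); omega
  · show a ≤ a + i; omega
  · intro b hb
    refine ⟨b + 1, Relation.ReflTransGen.single ⟨?_, hb, rtg_lt_of_le ?_⟩⟩
    · show b < a + (b + 1); omega
    · show a ≤ a + (b + 1); omega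

/-! ### not CP for the ultrapower of `(ℕ, <)` -/

theorem urel_nat_trans {x y z : UProd ℕ}
    (h1 : URel (fun _ => (· < ·)) x y) (h2 : URel (fun _ => (· < ·)) y z) :
    URel (fun _ => (· < ·)) x z := by
  rw [← mkU_out x, ← mkU_out y] at h1
  rw [← mkU_out y, ← mkU_out z] at h2
  rw [← mkU_out x, ← mkU_out z]
  rw [urel_mk] at *
  filter_upwards [h1, h2] with n ha hb
  omega

theorem urel_nat_irrefl (x : UProd ℕ) : ¬ URel (fun _ => (· < ·)) x x := by
  intro h
  rw [← mkU_out x, urel_mk] at h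
  obtain ⟨n, hn⟩ := h.exists
  omega

theorem urel_nat_of_transGen {x y : UProd ℕ}
    (h : Relation.TransGen (URel fun _ : ℕ => (· < · : ℕ → ℕ → Prop)) x y) :
    URel (fun _ : ℕ => (· < · : ℕ → ℕ → Prop)) x y := by
  induction h with
  | single h => exact h
  | tail _ h ih => exact urel_nat_trans ih h

theorem not_cp_ultra : ¬ CP (URel (fun _ : ℕ => (· < · : ℕ → ℕ → Prop))) := by
  intro h
  set R : UProd ℕ → UProd ℕ → Prop := URel (fun _ : ℕ => (· < ·)) with hR
  obtain ⟨f, _hseq, _h0, _hred, hcof⟩ := h (mkU fun _ => 0)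
  set g : ℕ → ℕ → ℕ := fun i => Quotient.out (f i) with hg
  set d : ℕ → ℕ := fun n => (Finset.range (n + 1)).sup (fun i => g i n) + 1 with hd
  have hax : R (mkU fun _ => 0) (mkU d) := by
    rw [hR, urel_mk]
    exact Filter.Eventually.of_forall fun n => Nat.succ_pos _
  obtain ⟨i, hi⟩ := hcof (mkU d) (Relation.ReflTransGen.single hax)
  have hi' : Relation.ReflTransGen R (mkU d) (f i) :=
    Relation.ReflTransGen.mono (fun a b hab => hab.1 : ∀ a b, Restrict R _ a b → R a b) _ _ hi
  have hfx : R (f i) (mkU d) := by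
    rw [hR, ← mkU_out (f i), urel_mk]
    have hcof' : ∀ᶠ n in Filter.cofinite, i ≤ n := by
      rw [Nat.cofinite_eq_atTop]
      exact Filter.eventually_atTop.2 ⟨i, fun n hn => hn⟩
    refine (hcof'.filter_mono (Filter.hyperfilter_le_cofinite)).mono fun n hn => ?_
    calc g i n ≤ (Finset.range (n + 1)).sup (fun j => g j n) :=
          Finset.le_sup (f := fun j => g j n) (b := i) (Finset.mem_range.2 (Nat.lt_succ_of_le hn))
      _ < d n := Nat.lt_succ_self _
  rcases Relation.reflTransGen_iff_eq_or_transGen.1 hi' with heq | htg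
  · rw [heq] at hfx
    exact urel_nat_irrefl _ hfx
  · exact urel_nat_irrefl (mkU d) (urel_nat_trans (urel_nat_of_transGen htg) hfx)

/-! ### NFP family -/

def rN (n : ℕ) : (ℕ ⊕ Unit) → (ℕ ⊕ Unit) → Prop := fun x y =>
  (∃ k, k < n ∧ x = Sum.inl k ∧ y = Sum.inl (k + 1)) ∨
  (x = Sum.inr () ∧ (y = Sum.inl 0 ∨ y = Sum.inl n))

def CC (n : ℕ) : Set (ℕ ⊕ Unit) :=
  {x | x = Sum.inr () ∨ ∃ k, k ≤ n ∧ x = Sum.inl k}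

theorem rN_mem {n : ℕ} {x y : ℕ ⊕ Unit} (h : rN n x y) : x ∈ CC n ∧ y ∈ CC n := by
  rcases h with ⟨k, hk, rfl, rfl⟩ | ⟨rfl, rfl | rfl⟩
  · exact ⟨Or.inr ⟨k, by omega, rfl⟩, Or.inr ⟨k + 1, by omega, rfl⟩⟩
  · exact ⟨Or.inl rfl, Or.inr ⟨0, by omega, rfl⟩⟩
  · exact ⟨Or.inl rfl, Or.inr ⟨n, le_refl n, rfl⟩⟩

theorem rN_chain (n : ℕ) : ∀ d k, k + d = n →
    Relation.ReflTransGen (rN n) (Sum.inl k) (Sum.inl n) := by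
  intro d
  induction d with
  | zero => intro k hk; rw [show k = n by omega]
  | succ d ih =>
    intro k hk
    exact Relation.ReflTransGen.head (Or.inl ⟨k, by omega, rfl, rfl⟩) (ih (k + 1) (by omega))

theorem rN_reach {n : ℕ} {x : ℕ ⊕ Unit} (h : x ∈ CC n) :
    Relation.ReflTransGen (rN n) x (Sum.inl n) := by
  rcases h with rfl | ⟨k, hk, rfl⟩
  · exact Relation.ReflTransGen.single (Or.inr ⟨rfl, Or.inr rfl⟩)
  · exact rN_chain n (n - k) k (by omega)

theorem rN_conv {n : ℕ} {a b : ℕ ⊕ Unit} (h : Conv (rN n) a b) :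
    a = b ∨ (a ∈ CC n ∧ b ∈ CC n) := by
  induction h with
  | refl => exact Or.inl rfl
  | tail _ hstep ih =>
    have hm := hstep.elim (fun h => rN_mem h) (fun h => (rN_mem h).symm)
    rcases ih with rfl | ⟨ha, _⟩
    · exact Or.inr hm
    · exact Or.inr ⟨ha, hm.2⟩

theorem nfp_rN (n : ℕ) : NFP (rN n) := by
  intro a b hb hconv
  rcases rN_conv hconv with rfl | ⟨ha, hbC⟩
  · exact Relation.ReflTransGen.refl
  · have hbn : b = Sum.inl n := by
      rcases hbC with rfl | ⟨k, hk, rfl⟩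
      · exact absurd ⟨Sum.inl 0, Or.inr ⟨rfl, Or.inl rfl⟩⟩ hb
      · rcases Nat.lt_or_ge k n with hlt | hge
        · exact absurd ⟨Sum.inl (k + 1), Or.inl ⟨k, hlt, rfl, rfl⟩⟩ hb
        · rw [show k = n by omega]
    rw [hbn]
    exact rN_reach ha

/-! ### not NFP for the ultraproduct -/

theorem urel_rN_from_chain {k : ℕ} {w : UProd (ℕ ⊕ Unit)}
    (h : URel rN (mkU fun _ => Sum.inl k) w) : w = mkU (fun _ => Sum.inl (k + 1)) := by
  rw [← mkU_out w, urel_mk] at h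
  have hk : ∀ᶠ n in (U : Filter ℕ), k < n := by
    refine Filter.Eventually.filter_mono Filter.hyperfilter_le_cofinite ?_
    rw [Nat.cofinite_eq_atTop]
    exact Filter.eventually_atTop.2 ⟨k + 1, fun n hn => by omega⟩
  rw [← mkU_out w]
  apply mkU_eq
  filter_upwards [h, hk] with n hn hkn
  rcases hn with ⟨k', hk', he, hy⟩ | ⟨he, _⟩
  · have : k = k' := by
      have := Sum.inl.inj he
      omega
    rw [hy, ← this]
  · exact absurd he (by simp)

theorem rtg_ultra_chain {z : UProd (ℕ ⊕ Unit)}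
    (h : Relation.ReflTransGen (URel rN) (mkU fun _ => Sum.inl 0) z) :
    ∃ k, z = mkU (fun _ => Sum.inl k) := by
  induction h with
  | refl => exact ⟨0, rfl⟩
  | tail _ hstep ih =>
    obtain ⟨k, rfl⟩ := ih
    exact ⟨k + 1, urel_rN_from_chain hstep⟩

theorem not_nfp_ultra : ¬ NFP (URel rN) := by
  intro h
  have hca : URel rN (mkU fun _ => Sum.inr ()) (mkU fun _ => Sum.inl 0) := by
    rw [urel_mk]
    exact Filter.Eventually.of_forall fun n => Or.inr ⟨rfl, Or.inl rfl⟩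
  have hcb : URel rN (mkU fun _ => Sum.inr ()) (mkU fun n => Sum.inl n) := by
    rw [urel_mk]
    exact Filter.Eventually.of_forall fun n => Or.inr ⟨rfl, Or.inr rfl⟩
  have hbNF : IsNormalForm (URel rN) (mkU fun n => Sum.inl n) := by
    rintro ⟨z, hz⟩
    rw [← mkU_out z, urel_mk] at hz
    obtain ⟨n, hn⟩ := hz.exists
    rcases hn with ⟨k, hk, he, -⟩ | ⟨he, -⟩
    · have := Sum.inl.inj he
      omega
    · exact absurd he (by simp)
  have hconv : Conv (URel rN) (mkU fun _ => Sum.inl 0) (mkU fun n => Sum.inl n) :=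
    Relation.ReflTransGen.head (Or.inr hca) (Relation.ReflTransGen.single (Or.inl hcb))
  obtain ⟨k, hk⟩ := rtg_ultra_chain (h _ _ hbNF hconv)
  have := mkU_exact hk
  have hmem : {n : ℕ | n = k} ∈ (Filter.hyperfilter ℕ : Ultrafilter ℕ) := by
    refine Filter.mem_of_superset this ?_
    intro n hn
    exact Sum.inl.inj hn
  refine Filter.notMem_hyperfilter_of_finite ?_ hmem
  exact (Set.finite_singleton k).subset fun n hn => hn

end S8

/-- none of NFP, CP, ¬CP is a generalised first-order property. -/
theorem stmt8 :
    ¬ IsGFOP (fun A r => NFP r) ∧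
    ¬ IsGFOP (fun A r => CP r) ∧
    ¬ IsGFOP (fun A r => ¬ CP r) := by
  refine ⟨?_, ?_, ?_⟩
  · exact S8.not_gfop_var (fun A r => NFP r) (ℕ ⊕ Unit) S8.rN S8.nfp_rN S8.not_nfp_ultra
  · exact S8.not_gfop_var (fun A r => CP r) ℕ (fun _ => (· < ·)) (fun _ => S8.cp_nat)
      S8.not_cp_ultra
  · exact S8.not_gfop_const (fun A r => ¬ CP r) ℕ (· < ·) (fun h => h S8.cp_nat)
      S8.not_cp_ultra
end

section
/- Neither INC nor ¬INC is a generalised first-order property: there is no set Φ of L-sentences such that an ARS satisfies Φ if and only if it is increasing (respectively, not increasing). -/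
open Relation Function FirstOrder

section Stmt10Aux

open FirstOrder Language

/-- The sentence `c_{n+1} → c_n` in the language with added constants. -/
private def chainSent (n : ℕ) : (Language.order[[ℕ]]).Sentence :=
  Relations.formula₂ (Sum.inl .le : (Language.order[[ℕ]]).Relations 2)
    ((Language.order.con (n + 1)).term) ((Language.order.con n).term)

/-- The complete theory of `(ℕ, <)` with respect to `arsStructure`. -/
private def Th0 : Language.order.Theory :=
  {φ | @Sentence.Realize _ ℕ (arsStructure ℕ (· < ·)) φ}

private def bigT : (Language.order[[ℕ]]).Theory :=
  (Language.order.lhomWithConstants ℕ).onTheory Th0 ∪ Set.range chainSent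

private theorem arsStructure_eq (A : Type) (S : Language.order.Structure A) :
    arsStructure A (fun a b => @Structure.RelMap _ A S 2 .le ![a, b]) = S := by
  rcases S with ⟨fm, rm⟩
  unfold arsStructure
  congr 1
  · funext n f
    exact Empty.elim f
  · funext n R v
    cases R
    have hv : v = ![v 0, v 1] := by
      funext i
      fin_cases i <;> rfl
    conv_rhs => rw [hv]
    rfl

private theorem key : ∃ (A : Type) (r : A → A → Prop), Nonempty A ∧ ¬ Increasing r ∧
    ∀ φ : Language.order.Sentence,
      (@Sentence.Realize _ A (arsStructure A r) φ ↔
        @Sentence.Realize _ ℕ (arsStructure ℕ (· < ·)) φ) := by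
  classical
  have hsat : bigT.IsSatisfiable := by
    rw [Theory.isSatisfiable_iff_isFinitelySatisfiable]
    intro T0 hT0
    set pick : (Language.order[[ℕ]]).Sentence → ℕ :=
      fun φ => if h : ∃ n, chainSent n = φ then h.choose else 0 with hpick
    set N : ℕ := T0.sup pick with hN
    letI instOrd : Language.order.Structure ℕ := arsStructure ℕ (· < ·)
    letI instC : (constantsOn ℕ).Structure ℕ := constantsOn.structure (fun i => (N + 1) - i)
    letI instSum : (Language.order[[ℕ]]).Structure ℕ :=
      Language.withConstantsStructure (L := Language.order) (M := ℕ) ℕ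
    haveI : (Language.order.lhomWithConstants ℕ).IsExpansionOn ℕ :=
      Language.withConstants_expansion (L := Language.order) (M := ℕ) ℕ
    haveI : ℕ ⊨ (T0 : (Language.order[[ℕ]]).Theory) := by
      rw [Theory.model_iff]
      intro φ hφ
      rcases hT0 hφ with hmem | hmem
      · obtain ⟨ψ, hψ, rfl⟩ := hmem
        rw [LHom.realize_onSentence]
        exact hψ
      · obtain ⟨m, rfl⟩ := hmem
        have hex : ∃ n, chainSent n = chainSent m := ⟨m, rfl⟩
        have hps : chainSent hex.choose = chainSent m := hex.choose_spec
        have hle : hex.choose ≤ N := by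
          have := Finset.le_sup (f := pick) hφ
          simpa [hpick, dif_pos hex] using this
        rw [← hps]
        have hreal : (ℕ ⊨ chainSent hex.choose) ↔
            ((N + 1) - (hex.choose + 1) < (N + 1) - hex.choose) := by
          simp only [chainSent, Sentence.Realize, Formula.realize_rel₂,
            Term.realize_constants]
          exact Iff.rfl
        rw [hreal]
        omega
    exact Theory.Model.isSatisfiable ℕ
  obtain ⟨M⟩ := hsat
  letI S : Language.order.Structure M := (Language.order.lhomWithConstants ℕ).reduct M
  haveI hexp : (Language.order.lhomWithConstants ℕ).IsExpansionOn M.Carrier :=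
    LHom.isExpansionOn_reduct _ _
  set r : M.Carrier → M.Carrier → Prop :=
    fun a b => @Structure.RelMap _ M S 2 .le ![a, b] with hr
  have harsEq : arsStructure M.Carrier r = S := arsStructure_eq M.Carrier S
  have hchain : ∀ n : ℕ,
      r ((Language.order.con (n + 1) : (Language.order[[ℕ]]).Constants) : M.Carrier)
        ((Language.order.con n : (Language.order[[ℕ]]).Constants) : M.Carrier) := by
    intro n
    have hmem : chainSent n ∈ bigT := Or.inr ⟨n, rfl⟩
    have := bigT.realize_sentence_of_mem (M := M) hmem
    have h2 := (Formula.realize_rel₂ (M := M)).mp this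
    simp only [Term.realize_constants] at h2
    exact h2
  refine ⟨M.Carrier, r, M.nonempty', ?_, ?_⟩
  · rintro ⟨f, hf⟩
    set g : ℕ → M.Carrier :=
      fun n => ((Language.order.con n : (Language.order[[ℕ]]).Constants) : M.Carrier) with hg
    have hdec : ∀ n, f (g (n + 1)) < f (g n) := fun n => hf _ _ (hchain n)
    have hbound : ∀ n, f (g n) + n ≤ f (g 0) := by
      intro n
      induction n with
      | zero => omega
      | succ k ih =>
        have := hdec k
        omega
    have := hbound (f (g 0) + 1)
    omega
  · intro φ
    rw [harsEq]
    have h1 : @Sentence.Realize _ M S φ ↔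
        M.Carrier ⊨ (Language.order.lhomWithConstants ℕ).onSentence φ :=
      (LHom.realize_onSentence (M := M.Carrier) (Language.order.lhomWithConstants ℕ) φ).symm
    by_cases hφ : φ ∈ Th0
    · refine iff_of_true ?_ hφ
      rw [h1]
      exact bigT.realize_sentence_of_mem (Or.inl ⟨φ, hφ, rfl⟩)
    · refine iff_of_false ?_ hφ
      have hnot : φ.not ∈ Th0 := hφ
      have : @Sentence.Realize _ M S φ.not :=
        (LHom.realize_onSentence (M := M.Carrier) (Language.order.lhomWithConstants ℕ)
          φ.not).mp (bigT.realize_sentence_of_mem (Or.inl ⟨φ.not, hnot, rfl⟩))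
      rw [Sentence.realize_not] at this
      exact this

private theorem natInc : Increasing (fun a b : ℕ => a < b) :=
  ⟨id, fun _ _ h => h⟩

end Stmt10Aux

/-- neither INC nor ¬INC is a generalised first-order property. -/
theorem stmt10 :
    ¬ IsGFOP (fun A r => Increasing r) ∧
    ¬ IsGFOP (fun A r => ¬ Increasing r) := by
  obtain ⟨A, r, hA, hninc, hiff⟩ := key
  constructor
  · rintro ⟨Φ, hΦ⟩
    have hN : ModelsSet ℕ (· < ·) Φ := (hΦ ℕ ⟨0⟩ _).mpr natInc
    have hM : ModelsSet A r Φ := fun φ hφ => (hiff φ).mpr (hN φ hφ)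
    exact hninc ((hΦ A hA r).mp hM)
  · rintro ⟨Φ, hΦ⟩
    have hM : ModelsSet A r Φ := (hΦ A hA r).mpr hninc
    have hN : ModelsSet ℕ (· < ·) Φ := fun φ hφ => (hiff φ).mp (hM φ hφ)
    exact (hΦ ℕ ⟨0⟩ _).mp hN natInc
end

section
/- Neither SC nor ¬SC is a generalised first-order property: there is no set Φ of L-sentences such that an ARS satisfies Φ if and only if it is strongly confluent (respectively, not strongly confluent). -/
open Relation Function FirstOrder

namespace Stmt11Aux

open FirstOrder Language Filter

inductive El : Type
  | A : ℕ → El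
  | B : ℕ → El
  | C : ℕ → El
  | X : ℕ → ℕ → El
  | Y : ℕ → ℕ → El

open El

def rel : El → El → Prop
  | A n, v => v = B n ∨ v = C n
  | B n, v => v = X n 0
  | C n, v => v = Y n 0
  | X n k, v => (k < n ∧ v = X n (k+1)) ∨ (k = n ∧ v = C n)
  | Y n k, v => (k < n ∧ v = Y n (k+1)) ∨ (k = n ∧ v = B n)

lemma y_aux (n : ℕ) : ∀ m k, n - k = m → k ≤ n → ReflTransGen rel (Y n k) (B n) := by
  intro m
  induction m with
  | zero =>
    intro k hm hk
    have : k = n := by omega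
    subst this
    exact ReflTransGen.single (Or.inr ⟨rfl, rfl⟩)
  | succ m ih =>
    intro k hm hk
    exact ReflTransGen.head (Or.inl ⟨by omega, rfl⟩) (ih (k + 1) (by omega) (by omega))

lemma y_to_b (n : ℕ) : ∀ k, k ≤ n → ReflTransGen rel (Y n k) (B n) :=
  fun k hk => y_aux n (n - k) k rfl hk

lemma x_aux (n : ℕ) : ∀ m k, n - k = m → k ≤ n → ReflTransGen rel (X n k) (C n) := by
  intro m
  induction m with
  | zero =>
    intro k hm hk
    have : k = n := by omega
    subst this
    exact ReflTransGen.single (Or.inr ⟨rfl, rfl⟩)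
  | succ m ih =>
    intro k hm hk
    exact ReflTransGen.head (Or.inl ⟨by omega, rfl⟩) (ih (k + 1) (by omega) (by omega))

lemma x_to_c (n : ℕ) : ∀ k, k ≤ n → ReflTransGen rel (X n k) (C n) :=
  fun k hk => x_aux n (n - k) k rfl hk

lemma sc_rel : StronglyConfluent rel := by
  intro a b c hb hc
  cases a with
  | A n =>
    rcases hb with rfl | rfl <;> rcases hc with rfl | rfl
    · exact ⟨B n, Or.inr rfl, ReflTransGen.refl⟩
    · exact ⟨B n, Or.inr rfl, ReflTransGen.head (show rel (C n) (Y n 0) from rfl)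
        (y_to_b n 0 (Nat.zero_le n))⟩
    · exact ⟨C n, Or.inr rfl, ReflTransGen.head (show rel (B n) (X n 0) from rfl)
        (x_to_c n 0 (Nat.zero_le n))⟩
    · exact ⟨C n, Or.inr rfl, ReflTransGen.refl⟩
  | B n => cases hb; cases hc; exact ⟨X n 0, Or.inr rfl, ReflTransGen.refl⟩
  | C n => cases hb; cases hc; exact ⟨Y n 0, Or.inr rfl, ReflTransGen.refl⟩
  | X n k =>
    have : b = c := by
      rcases hb with ⟨h1, rfl⟩ | ⟨h1, rfl⟩ <;> rcases hc with ⟨h2, rfl⟩ | ⟨h2, rfl⟩ <;>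
        first | rfl | omega
    subst this
    exact ⟨b, Or.inr rfl, ReflTransGen.refl⟩
  | Y n k =>
    have : b = c := by
      rcases hb with ⟨h1, rfl⟩ | ⟨h1, rfl⟩ <;> rcases hc with ⟨h2, rfl⟩ | ⟨h2, rfl⟩ <;>
        first | rfl | omega
    subst this
    exact ⟨b, Or.inr rfl, ReflTransGen.refl⟩

instance elStruct : Language.order.Structure El := arsStructure El rel

abbrev B' : Type := ((hyperfilter ℕ : Ultrafilter ℕ) : Filter ℕ).Product (fun _ => El)

/-- The induced relation on the ultrapower. -/
def s : B' → B' → Prop := fun x y =>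
  Structure.RelMap (L := Language.order) (M := B') (Language.orderRel.le) ![x, y]

lemma struct_eq {A : Type} (S : Language.order.Structure A) :
    arsStructure A (fun x y =>
      Structure.RelMap (L := Language.order) (M := A) Language.orderRel.le ![x, y]) = S := by
  cases S with
  | mk fm rm =>
    unfold arsStructure
    congr 1
    · funext n f; exact f.elim
    · funext n R v
      cases R with
      | le =>
        show @rm 2 Language.orderRel.le ![v 0, v 1] = @rm 2 Language.orderRel.le v
        have : ![v 0, v 1] = v := by funext i; fin_cases i <;> rfl
        rw [this]

example : arsStructure B' s = Ultraproduct.structure := struct_eq _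

/-- quotient class of a sequence -/
noncomputable def mk (x : ℕ → El) : B' := ↑x

lemma mk_eq {x y : ℕ → El} (h : ∀ᶠ n in (hyperfilter ℕ : Filter ℕ), x n = y n) :
    mk x = mk y := Quotient.sound' h

lemma s_iff (x y : ℕ → El) :
    s ↑x ↑y ↔ ∀ᶠ n in (hyperfilter ℕ : Filter ℕ), rel (x n) (y n) := by
  show Structure.RelMap (L := Language.order) (M := B') Language.orderRel.le ![↑x, ↑y] ↔ _
  have h : (![(↑x : B'), ((↑y : B') : B')]) = fun i => (↑(![x, y] i) : B') := by
    funext i; fin_cases i <;> rfl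
  refine (Iff.of_eq (congrArg (fun v => Structure.RelMap (L := Language.order) (M := B') Language.orderRel.le v) h)).trans ?_
  exact relMap_quotient_mk' (L := Language.order) (((hyperfilter ℕ : Ultrafilter ℕ) : Filter ℕ).productSetoid fun _ => El) Language.orderRel.le ![x, y]

instance : Nonempty El := ⟨El.A 0⟩

lemma eventually_gt (k : ℕ) : ∀ᶠ n in (hyperfilter ℕ : Filter ℕ), k < n :=
  Nat.hyperfilter_le_atTop (Filter.eventually_gt_atTop k)

lemma mk_ne {x y : ℕ → El} (h : ∀ n, x n ≠ y n) : (↑x : B') ≠ (↑y : B') := by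
  intro he
  have h2 : ∀ᶠ n in (hyperfilter ℕ : Filter ℕ), x n = y n := Quotient.exact' he
  obtain ⟨n, hn⟩ := h2.exists
  exact h n hn

lemma mk_ne' {x y : ℕ → El} (h : ∀ n, x n ≠ y n) : mk x ≠ mk y := mk_ne h

lemma reach_from_c : ∀ e : B', ReflTransGen s (mk (fun n => C n)) e →
    e = mk (fun n => C n) ∨ ∃ k, e = mk (fun n => Y n k) := by
  intro e h
  induction h with
  | refl => exact Or.inl rfl
  | @tail e' e'' h1 h2 ih =>
    obtain ⟨z, rfl⟩ := Quotient.exists_rep e''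
    rcases ih with rfl | ⟨k, rfl⟩
    · have h3 := (s_iff _ _).mp h2
      refine Or.inr ⟨0, mk_eq ?_⟩
      exact h3.mono fun n hn => hn
    · have h3 := (s_iff _ _).mp h2
      refine Or.inr ⟨k + 1, mk_eq ?_⟩
      filter_upwards [h3, eventually_gt k] with n hn hk
      rcases hn with ⟨_, hzz⟩ | ⟨hkn, _⟩
      · exact hzz
      · omega

lemma not_sc_s : ¬ StronglyConfluent s := by
  intro h
  have hab : s (mk fun n => A n) (mk fun n => B n) :=
    (s_iff _ _).mpr (Eventually.of_forall fun n => Or.inl rfl)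
  have hac : s (mk fun n => A n) (mk fun n => C n) :=
    (s_iff _ _).mpr (Eventually.of_forall fun n => Or.inr rfl)
  obtain ⟨d, hd1, hd2⟩ := h _ _ _ hab hac
  have hr := reach_from_c d hd2
  rcases hd1 with hbd | rfl
  · obtain ⟨z, rfl⟩ := Quotient.exists_rep d
    have h3 := (s_iff _ _).mp hbd
    have hz : (Quotient.mk _ z : B') = mk (fun n => X n 0) :=
      mk_eq (h3.mono fun n hn => hn)
    rw [hz] at hr
    rcases hr with he | ⟨k, he⟩
    · exact mk_ne' (fun n hxy => by injection hxy) he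
    · exact mk_ne' (fun n hxy => by injection hxy) he
  · rcases hr with he | ⟨k, he⟩
    · exact mk_ne' (fun n hxy => by injection hxy) he
    · exact mk_ne' (fun n hxy => by injection hxy) he

lemma models_transfer (Φ : Set (Language.order.Sentence)) :
    ModelsSet El rel Φ ↔ ModelsSet B' s Φ := by
  unfold ModelsSet
  refine forall₂_congr fun φ hφ => ?_
  have e : arsStructure B' s = Ultraproduct.structure := struct_eq _
  have los := Ultraproduct.sentence_realize (M := fun _ : ℕ => El) (u := hyperfilter ℕ) φ
  rw [Filter.eventually_const] at los
  constructor
  · intro hEl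
    rw [e]
    exact los.mpr hEl
  · intro hB
    rw [e] at hB
    exact los.mp hB

end Stmt11Aux

/-- neither SC nor ¬SC is a generalised first-order property. -/
theorem stmt11 :
    ¬ IsGFOP (fun A r => StronglyConfluent r) ∧
    ¬ IsGFOP (fun A r => ¬ StronglyConfluent r) := by
  constructor
  · rintro ⟨Φ, hΦ⟩
    have h1 : ModelsSet Stmt11Aux.El Stmt11Aux.rel Φ :=
      (hΦ Stmt11Aux.El ⟨Stmt11Aux.El.A 0⟩ Stmt11Aux.rel).mpr Stmt11Aux.sc_rel
    exact Stmt11Aux.not_sc_s ((hΦ Stmt11Aux.B' inferInstance Stmt11Aux.s).mp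
      ((Stmt11Aux.models_transfer Φ).mp h1))
  · rintro ⟨Φ, hΦ⟩
    have h2 : ModelsSet Stmt11Aux.B' Stmt11Aux.s Φ :=
      (hΦ Stmt11Aux.B' inferInstance Stmt11Aux.s).mpr Stmt11Aux.not_sc_s
    exact (hΦ Stmt11Aux.El ⟨Stmt11Aux.El.A 0⟩ Stmt11Aux.rel).mp
      ((Stmt11Aux.models_transfer Φ).mpr h2) Stmt11Aux.sc_rel
end

section
/- For every ordinal α ≥ 2, neither DCR_α nor ¬DCR_α is a generalised first-order property; moreover, neither DCR (meaning: DCR_α for some ordinal α) nor ¬DCR is a generalised first-order property. -/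
open Relation Function FirstOrder

namespace Stmt12Aux

/-- The carrier: component `n` uses codes `(n, k)`. -/
abbrev MM : Type := ℕ × ℕ

/-- In component `n`: `0` is the peak `a`; `1..n+1` the `b`-chain; `n+2..2n+2` the `c`-chain;
`2n+3` the common reduct `e`. Min join length of `b₀ = (n,1)` and `c₀ = (n,n+2)` is `n+1`. -/
def rr : MM → MM → Prop := fun x y =>
  x.1 = y.1 ∧ (
    (x.2 = 0 ∧ (y.2 = 1 ∨ y.2 = x.1 + 2)) ∨
    (1 ≤ x.2 ∧ x.2 ≤ x.1 ∧ y.2 = x.2 + 1) ∨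
    (x.2 = x.1 + 1 ∧ y.2 = 2*x.1 + 3) ∨
    (x.1 + 2 ≤ x.2 ∧ x.2 ≤ 2*x.1 + 1 ∧ y.2 = x.2 + 1) ∨
    (x.2 = 2*x.1 + 2 ∧ y.2 = 2*x.1 + 3))

lemma rr_det {x y z : MM} (hx : x.2 ≠ 0) (h1 : rr x y) (h2 : rr x z) : y = z := by
  rcases x with ⟨x1, x2⟩; rcases y with ⟨y1, y2⟩; rcases z with ⟨z1, z2⟩
  obtain ⟨e1, h1⟩ := h1; obtain ⟨e2, h2⟩ := h2
  dsimp only at *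
  simp only [Prod.mk.injEq]
  constructor <;> omega

/-- The non-peak part of `rr`. -/
def rr0 : MM → MM → Prop := fun x y => rr x y ∧ x.2 ≠ 0

lemma bstep_mid (n c : ℕ) (h1 : 1 ≤ c) (h2 : c ≤ n) : rr0 (n, c) (n, c + 1) :=
  ⟨⟨rfl, Or.inr (Or.inl ⟨h1, h2, rfl⟩)⟩, by omega⟩

lemma bstep_end (n : ℕ) : rr0 (n, n + 1) (n, 2*n + 3) :=
  ⟨⟨rfl, Or.inr (Or.inr (Or.inl ⟨rfl, rfl⟩))⟩, by omega⟩

lemma cstep_mid (n c : ℕ) (h1 : n + 2 ≤ c) (h2 : c ≤ 2*n + 1) : rr0 (n, c) (n, c + 1) :=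
  ⟨⟨rfl, Or.inr (Or.inr (Or.inr (Or.inl ⟨h1, h2, rfl⟩)))⟩, by omega⟩

lemma cstep_end (n : ℕ) : rr0 (n, 2*n + 2) (n, 2*n + 3) :=
  ⟨⟨rfl, Or.inr (Or.inr (Or.inr (Or.inr ⟨rfl, rfl⟩)))⟩, by omega⟩

lemma bchain (n : ℕ) : ∀ k c, c + k = n + 1 → 1 ≤ c →
    Relation.ReflTransGen rr0 (n, c) (n, 2*n+3) := by
  intro k
  induction k with
  | zero =>
    intro c hc h1
    have : c = n + 1 := by omega
    subst this
    exact Relation.ReflTransGen.single (bstep_end n)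
  | succ k ih =>
    intro c hc h1
    exact Relation.ReflTransGen.head (bstep_mid n c h1 (by omega))
      (ih (c+1) (by omega) (by omega))

lemma cchain (n : ℕ) : ∀ k c, c + k = 2*n + 2 → n + 2 ≤ c →
    Relation.ReflTransGen rr0 (n, c) (n, 2*n+3) := by
  intro k
  induction k with
  | zero =>
    intro c hc h1
    have : c = 2*n + 2 := by omega
    subst this
    exact Relation.ReflTransGen.single (cstep_end n)
  | succ k ih =>
    intro c hc h1
    exact Relation.ReflTransGen.head (cstep_mid n c h1 (by omega))
      (ih (c+1) (by omega) (by omega))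

lemma breach (n : ℕ) : Relation.ReflTransGen rr0 (n, 1) (n, 2*n+3) :=
  bchain n n 1 (by omega) (by omega)

lemma creach (n : ℕ) : Relation.ReflTransGen rr0 (n, n+2) (n, 2*n+3) :=
  cchain n n (n+2) (by omega) (by omega)

/-- `rr` steps out of the peak `(n,0)` go to `(n,1)` or `(n,n+2)`. -/
lemma peak_succ {n : ℕ} {y : MM} (h : rr (n, 0) y) : y = (n, 1) ∨ y = (n, n+2) := by
  obtain ⟨e, h⟩ := h
  rcases y with ⟨y1, y2⟩
  dsimp only at e h
  subst e
  have : y2 = 1 ∨ y2 = n + 2 := by omega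
  rcases this with h' | h'
  · left; simp [h']
  · right; simp [h']

/-- The two-label decreasing labelling of `rr`, padded to labels below `α`. -/
def fL (α : Ordinal.{0}) : {β : Ordinal.{0} // β < α} → MM → MM → Prop := fun i x y =>
  rr x y ∧ (if i.val = 1 then x.2 = 0 else if i.val = 0 then x.2 ≠ 0 else False)

lemma dcr_rr {α : Ordinal.{0}} (hα : 2 ≤ α) : DCRord α rr := by
  have h0 : (0 : Ordinal) < α := lt_of_lt_of_le (by norm_num) hα
  have h1 : (1 : Ordinal) < α := lt_of_lt_of_le (by norm_num) hα
  refine ⟨fL α, ?_, ?_⟩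
  · intro x y
    constructor
    · intro hxy
      by_cases hx : x.2 = 0
      · exact ⟨⟨1, h1⟩, hxy, by simp [hx]⟩
      · exact ⟨⟨0, h0⟩, hxy, by simp [hx]⟩
    · rintro ⟨i, hi, -⟩
      exact hi
  · intro i j a b c hab hac
    by_cases ha : a.2 = 0
    · -- peak at `a = (n, 0)`; both labels are `1`; join at `e` using only `0`-steps
      have hi : i.val = 1 := by
        by_contra h
        rcases hab with ⟨-, hcond⟩
        rw [if_neg h] at hcond
        by_cases h0' : i.val = 0
        · rw [if_pos h0'] at hcond; exact hcond ha
        · rw [if_neg h0'] at hcond; exact hcond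
      have hj : j.val = 1 := by
        by_contra h
        rcases hac with ⟨-, hcond⟩
        rw [if_neg h] at hcond
        by_cases h0' : j.val = 0
        · rw [if_pos h0'] at hcond; exact hcond ha
        · rw [if_neg h0'] at hcond; exact hcond
      obtain ⟨n, k⟩ := a
      dsimp only at ha
      subst ha
      have hsub : ∀ (l : {β : Ordinal.{0} // β < α}), l.val = 1 →
          ∀ x y, rr0 x y →
            Below (fun i j : {β : Ordinal.{0} // β < α} => i.val < j.val) (fL α) l x y := by
        rintro l hl x y ⟨hxy, hx⟩
        refine ⟨⟨0, h0⟩, ?_, hxy, by simp [fL, hx]⟩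
        show (0 : Ordinal) < l.val
        rw [hl]
        exact zero_lt_one
      have hE : ∀ (l : {β : Ordinal.{0} // β < α}), l.val = 1 → ∀ y : MM, rr (n, 0) y →
          Relation.ReflTransGen
            (Below (fun i j : {β : Ordinal.{0} // β < α} => i.val < j.val) (fL α) l)
            y (n, 2*n+3) := by
        intro l hl y hy
        rcases peak_succ hy with h | h <;> subst h
        · exact Relation.ReflTransGen.mono (hsub l hl) _ _ (breach n)
        · exact Relation.ReflTransGen.mono (hsub l hl) _ _ (creach n)
      exact ⟨(n, 2*n+3), (n, 2*n+3), (n, 2*n+3), (n, 2*n+3), (n, 2*n+3),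
        hE i hi b hab.1, Or.inr rfl, Relation.ReflTransGen.refl,
        hE j hj c hac.1, Or.inr rfl, Relation.ReflTransGen.refl⟩
    · have hbc : b = c := rr_det ha hab.1 hac.1
      subst hbc
      exact ⟨b, b, b, b, b, Relation.ReflTransGen.refl, Or.inr rfl, Relation.ReflTransGen.refl,
        Relation.ReflTransGen.refl, Or.inr rfl, Relation.ReflTransGen.refl⟩

/-! ### The ultrapower of `(MM, rr)` over a nonprincipal ultrafilter -/

noncomputable section

open FirstOrder.Language

instance : Language.order.Structure MM := arsStructure MM rr

abbrev uu : Ultrafilter ℕ := Filter.hyperfilter ℕ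

abbrev MS : Type := (↑uu : Filter ℕ).Product (fun _ : ℕ => MM)

/-- The ultrapower relation. -/
def rs : MS → MS → Prop := fun x y =>
  Structure.RelMap (L := Language.order) (M := MS) .le ![x, y]

lemma rs_mk (f g : ℕ → MM) :
    rs (Quotient.mk _ f) (Quotient.mk _ g) ↔ ∀ᶠ n in (uu : Filter ℕ), rr (f n) (g n) := by
  have hv : (![Quotient.mk _ f, Quotient.mk _ g] : Fin 2 → MS) =
      fun i => (Quotient.mk _ (![f, g] i) : MS) := by
    funext i; fin_cases i <;> rfl
  show Structure.RelMap (L := Language.order) (M := MS) .le _ ↔ _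
  rw [hv]
  exact Language.relMap_quotient_mk' (L := Language.order) ((↑uu : Filter ℕ).productSetoid (fun _ : ℕ => MM)) Language.orderRel.le ![f, g]

lemma structure_ext {L : Language} {N : Type*} (S T : L.Structure N)
    (hf : ∀ n (F : L.Functions n) v, S.funMap F v = T.funMap F v)
    (hr : ∀ n (R : L.Relations n) v, S.RelMap R v ↔ T.RelMap R v) : S = T := by
  rcases S with ⟨Sf, Sr⟩; rcases T with ⟨Tf, Tr⟩
  have h1 : @Sf = @Tf := by funext n F v; exact hf n F v
  have h2 : @Sr = @Tr := by funext n R v; exact propext (hr n R v)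
  cases h1; cases h2; rfl

lemma hStr : (inferInstance : Language.order.Structure MS) = arsStructure MS rs := by
  apply structure_ext
  · intro n F v
    exact F.elim
  · intro n R v
    cases R
    have hv : v = ![v 0, v 1] := by
      funext i; fin_cases i <;> rfl
    show Structure.RelMap (L := Language.order) (M := MS) .le v ↔ rs (v 0) (v 1)
    conv_lhs => rw [hv]
    exact Iff.rfl

lemma realize_transfer (φ : Language.order.Sentence) :
    (@Language.Sentence.Realize Language.order MM (arsStructure MM rr) φ) ↔
    (@Language.Sentence.Realize Language.order MS (arsStructure MS rs) φ) := by
  have h := Ultraproduct.sentence_realize (M := fun _ : ℕ => MM) (u := uu) φ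
  rw [Filter.eventually_const] at h
  rw [← hStr]
  exact h.symm

lemma models_transfer (Φ : Set (Language.order.Sentence)) :
    ModelsSet MM rr Φ ↔ ModelsSet MS rs Φ :=
  forall₂_congr fun φ _ => realize_transfer φ

/-! ### Bounded reachability and failure of joinability in the ultrapower -/

/-- Reachability in at most `k` `rr`-steps. -/
def br : ℕ → MM → MM → Prop
  | 0 => fun x y => x = y
  | (k+1) => fun x y => x = y ∨ ∃ z, rr x z ∧ br k z y

lemma br_refl : ∀ k x, br k x x
  | 0, _ => rfl
  | (_+1), _ => Or.inl rfl

lemma br_snoc : ∀ k x y z, br k x y → rr y z → br (k+1) x z := by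
  intro k
  induction k with
  | zero =>
    intro x y z h hyz
    cases h
    exact Or.inr ⟨z, hyz, rfl⟩
  | succ k ih =>
    rintro x y z (rfl | ⟨w, hw, hbr⟩) hyz
    · exact Or.inr ⟨z, hyz, br_refl (k + 1) z⟩
    · exact Or.inr ⟨w, hw, ih _ _ _ hbr hyz⟩

lemma rtg_br {x y : MS} (h : Relation.ReflTransGen rs x y) :
    ∃ (k : ℕ) (g g' : ℕ → MM), x = Quotient.mk _ g ∧ y = Quotient.mk _ g' ∧
      ∀ᶠ n in (uu : Filter ℕ), br k (g n) (g' n) := by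
  induction h with
  | refl =>
    obtain ⟨g, hg⟩ := Quotient.exists_rep x
    exact ⟨0, g, g, hg.symm, hg.symm, Filter.Eventually.of_forall fun n => rfl⟩
  | @tail y' z hxy hyz ih =>
    obtain ⟨k, g, g', hx, hy, hev⟩ := ih
    obtain ⟨g2, hz⟩ := Quotient.exists_rep z
    rw [hy, ← hz] at hyz
    have hr : ∀ᶠ n in (uu : Filter ℕ), rr (g' n) (g2 n) := (rs_mk _ _).1 hyz
    exact ⟨k + 1, g, g2, hx, hz.symm,
      (hev.and hr).mono fun n hn => br_snoc _ _ _ _ hn.1 hn.2⟩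

lemma br_b {n : ℕ} : ∀ k c (y : MM), 1 ≤ c → c + k ≤ n + 1 → br k (n, c) y →
    y.1 = n ∧ 1 ≤ y.2 ∧ y.2 ≤ c + k := by
  intro k
  induction k with
  | zero =>
    rintro c y h1 h2 rfl
    exact ⟨rfl, h1, by omega⟩
  | succ k ih =>
    rintro c y h1 h2 (rfl | ⟨z, hz, hbr⟩)
    · exact ⟨rfl, h1, by omega⟩
    · rcases z with ⟨z1, z2⟩
      obtain ⟨hzeq, hzr⟩ := hz
      dsimp only at hzeq hzr
      have hz2 : z2 = c + 1 := by omega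
      rw [← hzeq, hz2] at hbr
      have := ih (c + 1) y (by omega) (by omega) hbr
      exact ⟨this.1, this.2.1, by omega⟩

lemma br_c {n : ℕ} : ∀ k c (y : MM), n + 2 ≤ c → c ≤ 2*n + 3 → br k (n, c) y →
    y.1 = n ∧ n + 2 ≤ y.2 ∧ y.2 ≤ 2*n + 3 := by
  intro k
  induction k with
  | zero =>
    rintro c y h1 h2 rfl
    exact ⟨rfl, h1, h2⟩
  | succ k ih =>
    rintro c y h1 h2 (rfl | ⟨z, hz, hbr⟩)
    · exact ⟨rfl, h1, h2⟩
    · rcases z with ⟨z1, z2⟩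
      obtain ⟨hzeq, hzr⟩ := hz
      dsimp only at hzeq hzr
      rw [← hzeq] at hbr
      have hz2 : n + 2 ≤ z2 ∧ z2 ≤ 2*n + 3 := by omega
      exact ih z2 y hz2.1 hz2.2 hbr

lemma not_joinable :
    ¬ ∃ d : MS, Relation.ReflTransGen rs (Quotient.mk _ (fun n => ((n, 1) : MM))) d ∧
        Relation.ReflTransGen rs (Quotient.mk _ (fun n => ((n, n + 2) : MM))) d := by
  rintro ⟨d, hb, hc⟩
  obtain ⟨k1, g1, h1, hx1, hd1, hev1⟩ := rtg_br hb
  obtain ⟨k2, g2, h2, hx2, hd2, hev2⟩ := rtg_br hc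
  have e1 : ∀ᶠ n in (uu : Filter ℕ), (fun n => ((n, 1) : MM)) n = g1 n := Quotient.exact hx1
  have e2 : ∀ᶠ n in (uu : Filter ℕ), (fun n => ((n, n + 2) : MM)) n = g2 n := Quotient.exact hx2
  have e3 : ∀ᶠ n in (uu : Filter ℕ), h1 n = h2 n := Quotient.exact (hd1.symm.trans hd2)
  have hall := ((hev1.and hev2).and ((e1.and e2).and e3))
  have hmem : {n | (br k1 (g1 n) (h1 n) ∧ br k2 (g2 n) (h2 n)) ∧
      ((n, 1) = g1 n ∧ (n, n + 2) = g2 n) ∧ h1 n = h2 n} ∈ (uu : Filter ℕ) := hall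
  have hinf : {n | (br k1 (g1 n) (h1 n) ∧ br k2 (g2 n) (h2 n)) ∧
      ((n, 1) = g1 n ∧ (n, n + 2) = g2 n) ∧ h1 n = h2 n}.Infinite := by
    intro hfin
    exact Filter.notMem_hyperfilter_of_finite hfin hmem
  obtain ⟨n, hn, hnk⟩ := hinf.exists_gt k1
  obtain ⟨⟨hbr1, hbr2⟩, ⟨hg1, hg2⟩, hh⟩ := hn
  rw [← hg1] at hbr1
  rw [← hg2] at hbr2
  rw [hh] at hbr1
  have Hb := br_b k1 1 (h2 n) (by omega) (by omega) hbr1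
  have Hc := br_c k2 (n + 2) (h2 n) (by omega) (by omega) hbr2
  omega

/-- The failing peak in the ultrapower: no labelling can be decreasing. -/
lemma not_dcrord_rs (α : Ordinal.{0}) : ¬ DCRord α rs := by
  rintro ⟨f, hcov, hLD⟩
  set aH : MS := Quotient.mk _ (fun n => ((n, 0) : MM)) with haH
  set bH : MS := Quotient.mk _ (fun n => ((n, 1) : MM)) with hbH
  set cH : MS := Quotient.mk _ (fun n => ((n, n + 2) : MM)) with hcH
  have hab : rs aH bH := (rs_mk _ _).2
    (Filter.Eventually.of_forall fun n => ⟨rfl, Or.inl ⟨rfl, Or.inl rfl⟩⟩)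
  have hac : rs aH cH := (rs_mk _ _).2
    (Filter.Eventually.of_forall fun n => ⟨rfl, Or.inl ⟨rfl, Or.inr rfl⟩⟩)
  obtain ⟨i, hi⟩ := (hcov _ _).1 hab
  obtain ⟨j, hj⟩ := (hcov _ _).1 hac
  obtain ⟨b', b'', c', c'', d, H1, H2, H3, H4, H5, H6⟩ := hLD i j aH bH cH hi hj
  have hsub : ∀ (l : {β : Ordinal.{0} // β < α}) (x y : MS),
      Below (fun i j : {β : Ordinal.{0} // β < α} => i.val < j.val) f l x y → rs x y := by
    rintro l x y ⟨γ, -, hγ⟩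
    exact (hcov x y).2 ⟨γ, hγ⟩
  have hb : Relation.ReflTransGen rs bH d := by
    refine ((Relation.ReflTransGen.mono (hsub i) _ _ H1).trans ?_).trans (Relation.ReflTransGen.mono (show ∀ x y, _ → rs x y from fun x y hxy => ?_) _ _ H3)
    · rcases H2 with h | h
      · exact Relation.ReflTransGen.single ((hcov _ _).2 ⟨j, h⟩)
      · rw [h]
    · rcases hxy with h | h
      · exact hsub i x y h
      · exact hsub j x y h
  have hcd : Relation.ReflTransGen rs cH d := by
    refine ((Relation.ReflTransGen.mono (hsub j) _ _ H4).trans ?_).trans (Relation.ReflTransGen.mono (show ∀ x y, _ → rs x y from fun x y hxy => ?_) _ _ H6)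
    · rcases H5 with h | h
      · exact Relation.ReflTransGen.single ((hcov _ _).2 ⟨i, h⟩)
      · rw [h]
    · rcases hxy with h | h
      · exact hsub i x y h
      · exact hsub j x y h
  exact not_joinable ⟨d, hb, hcd⟩

end

end Stmt12Aux

/-- for every ordinal `α ≥ 2`, neither `DCR_α` nor `¬DCR_α` is a gfop;
moreover, neither `DCR` nor `¬DCR` is a gfop. -/
theorem stmt12 :
    (∀ α : Ordinal.{0}, 2 ≤ α →
      ¬ IsGFOP (fun A r => DCRord α r) ∧ ¬ IsGFOP (fun A r => ¬ DCRord α r)) ∧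
    ¬ IsGFOP (fun A r => DCR r) ∧ ¬ IsGFOP (fun A r => ¬ DCR r) := by
  
  have key : ∀ P : ∀ A : Type, (A → A → Prop) → Prop,
      P Stmt12Aux.MM Stmt12Aux.rr → ¬ P Stmt12Aux.MS Stmt12Aux.rs →
      ¬ IsGFOP P ∧ ¬ IsGFOP (fun A r => ¬ P A r) := by
    intro P hM hMS
    constructor
    · rintro ⟨Φ, hΦ⟩
      have h1 : ModelsSet Stmt12Aux.MM Stmt12Aux.rr Φ :=
        (hΦ Stmt12Aux.MM ⟨(0, 0)⟩ Stmt12Aux.rr).2 hM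
      have h2 : ModelsSet Stmt12Aux.MS Stmt12Aux.rs Φ :=
        (Stmt12Aux.models_transfer Φ).1 h1
      exact hMS ((hΦ Stmt12Aux.MS inferInstance Stmt12Aux.rs).1 h2)
    · rintro ⟨Φ, hΦ⟩
      have h1 : ModelsSet Stmt12Aux.MS Stmt12Aux.rs Φ :=
        (hΦ Stmt12Aux.MS inferInstance Stmt12Aux.rs).2 hMS
      have h2 : ModelsSet Stmt12Aux.MM Stmt12Aux.rr Φ :=
        (Stmt12Aux.models_transfer Φ).2 h1
      exact (hΦ Stmt12Aux.MM ⟨(0, 0)⟩ Stmt12Aux.rr).1 h2 hM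
  refine ⟨fun α hα => key (fun A r => DCRord α r) (Stmt12Aux.dcr_rr hα)
      (Stmt12Aux.not_dcrord_rs α), ?_⟩
  exact key (fun A r => DCR r) ⟨2, Stmt12Aux.dcr_rr le_rfl⟩
    (fun ⟨α, h⟩ => Stmt12Aux.not_dcrord_rs α h)
end

section
/- If an ARS (A,→) satisfies the cofinality property, then (A,→) is DCR₂: there exist relations →₀ and →₁ on A with → = →₀ ∪ →₁ such that every peak c ←_β a →_α b with α,β ∈ {0,1} can be joined according to the decreasing-diagram condition over the order 0 < 1, i.e. there exist d, b', b'', c', c'' with b ↠_{<α} b', b' →^=_β b'', b'' ↠_{(<α)∪(<β)} d and c ↠_{<β} c', c' →^=_α c'', c'' ↠_{(<α)∪(<β)} d. -/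
open Relation Function FirstOrder

namespace Stmt14Aux

variable {A : Type} {r : A → A → Prop}

/-- Iterated relation: paths of length exactly `m`. -/
def rPow (r : A → A → Prop) : ℕ → A → A → Prop
  | 0, x, y => x = y
  | (m+1), x, y => ∃ z, r x z ∧ rPow r m z y

lemma rPow_rtg : ∀ m x y, rPow r m x y → ReflTransGen r x y := by
  intro m
  induction m with
  | zero => intro x y h; cases h; exact .refl
  | succ m ih =>
    rintro x y ⟨z, hxz, hz⟩
    exact ReflTransGen.head hxz (ih _ _ hz)

lemma rPow_snoc : ∀ m x y z, rPow r m x y → r y z → rPow r (m+1) x z := by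
  intro m
  induction m with
  | zero => intro x y z h hyz; cases h; exact ⟨z, hyz, rfl⟩
  | succ m ih =>
    rintro x y z ⟨w, hxw, hw⟩ hyz
    exact ⟨w, hxw, ih _ _ _ hw hyz⟩

lemma rtg_rPow {x y : A} (h : ReflTransGen r x y) : ∃ m, rPow r m x y := by
  induction h with
  | refl => exact ⟨0, rfl⟩
  | tail _ hstep ih => obtain ⟨m, hm⟩ := ih; exact ⟨m+1, rPow_snoc m _ _ _ hm hstep⟩

lemma conv_symm {x y : A} (h : Conv r x y) : Conv r y x :=
  ReflTransGen.mono (fun _ _ h => Or.symm h) _ _ (ReflTransGen.swap _ _ h)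

lemma rtg_conv {x y : A} (h : ReflTransGen r x y) : Conv r x y :=
  ReflTransGen.mono (fun _ _ hh => Or.inl hh) _ _ h

lemma conv_equivalence : Equivalence (Conv r) :=
  ⟨fun _ => .refl, conv_symm, fun h₁ h₂ => h₁.trans h₂⟩

lemma redseq_rtg {f : ℕ → A} (hf : IsRedSeq r f) : ∀ i j, i ≤ j → ReflTransGen r (f i) (f j) := by
  intro i j hij
  induction j with
  | zero => cases Nat.le_zero.mp hij; exact .refl
  | succ j ih =>
    rcases Nat.lt_or_ge i (j+1) with h | h
    · have hj : ReflTransGen r (f i) (f j) := ih (Nat.lt_succ_iff.mp h)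
      rcases hf j with hs | hc
      · exact hj.tail hs
      · rw [hc (j+1) (Nat.le_succ j)]; exact hj
    · have : i = j + 1 := le_antisymm hij h
      cases this; exact .refl

lemma confluent_of_cp (hcp : CP r) : Confluent r := by
  intro a b c hab hac
  obtain ⟨f, hf, hf0, hall, hcof⟩ := hcp a
  obtain ⟨i, hbi⟩ := hcof b hab
  obtain ⟨j, hcj⟩ := hcof c hac
  have hbi' : ReflTransGen r b (f i) := ReflTransGen.mono (fun _ _ h => h.1) _ _ hbi
  have hcj' : ReflTransGen r c (f j) := ReflTransGen.mono (fun _ _ h => h.1) _ _ hcj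
  exact ⟨f (max i j), hbi'.trans (redseq_rtg hf i _ (le_max_left _ _)),
    hcj'.trans (redseq_rtg hf j _ (le_max_right _ _))⟩

lemma cr_of_cp (hcp : CP r) {x y : A} (h : Conv r x y) :
    ∃ z, ReflTransGen r x z ∧ ReflTransGen r y z := by
  have hconf := confluent_of_cp hcp
  induction h with
  | refl => exact ⟨x, .refl, .refl⟩
  | tail _ hstep ih =>
    obtain ⟨z, hxz, hbz⟩ := ih
    rcases hstep with hs | hs
    · obtain ⟨w, hzw, hcw⟩ := hconf _ _ _ hbz (ReflTransGen.single hs)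
      exact ⟨w, hxz.trans hzw, hcw⟩
    · exact ⟨z, hxz, ReflTransGen.head hs hbz⟩

end Stmt14Aux

-- appended to aux1 content for testing
namespace Stmt14Aux
variable {A : Type} {r : A → A → Prop}

lemma trunk_exists (hcp : CP r) (a : A) : ∃ g : ℕ → A,
    (∀ k, r (g k) (g (k+1)) ∨ g (k+1) = g k) ∧
    (∀ k m, g k = g m → g (k+1) = g (m+1)) ∧
    (∀ x, Conv r x a → ∃ k, Relation.ReflTransGen r x (g k)) ∧
    (∀ k, Conv r (g k) a) := by
  classical
  obtain ⟨f, hf, hf0, hall, hcof⟩ := hcp a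
  -- every convertible point reduces to some point of f
  have convcof : ∀ x, Conv r x a → ∃ i, ReflTransGen r x (f i) := by
    intro x hx
    obtain ⟨z, hxz, haz⟩ := cr_of_cp hcp hx
    obtain ⟨i, hzi⟩ := hcof z haz
    exact ⟨i, hxz.trans (ReflTransGen.mono (fun _ _ h => h.1) _ _ hzi)⟩
  by_cases hinf : ∃ p, ∀ N, ∃ i, N ≤ i ∧ f i = p
  · -- a point occurs cofinally often: it is a cofinal point
    obtain ⟨p, hp⟩ := hinf
    have hfp : ∀ i, ReflTransGen r (f i) p := by
      intro i
      obtain ⟨j, hij, hj⟩ := hp i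
      rw [← hj]; exact redseq_rtg hf i j hij
    refine ⟨fun _ => p, fun _ => Or.inr rfl, fun _ _ _ => rfl, ?_, ?_⟩
    · intro x hx
      obtain ⟨i, hi⟩ := convcof x hx
      exact ⟨0, hi.trans (hfp i)⟩
    · intro _
      obtain ⟨j, _, hj⟩ := hp 0
      exact conv_symm (rtg_conv (hj ▸ hall j))
  · push_neg at hinf
    choose Nb hNb using hinf
    -- last occurrence of a value
    set Lv : A → ℕ := fun v => Nat.findGreatest (fun i => f i = v) (Nb v) with hLv
    have hocc_lt : ∀ m, m < Nb (f m) := by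
      intro m
      by_contra h
      exact hNb (f m) m (le_of_not_gt h) rfl
    have hLmem : ∀ m, f (Lv (f m)) = f m := by
      intro m
      exact Nat.findGreatest_spec (P := fun i => f i = f m) (le_of_lt (hocc_lt m)) rfl
    have hLub : ∀ m i, f i = f m → i ≤ Lv (f m) := by
      intro m i hi
      have : i < Nb (f m) := hi ▸ hocc_lt i
      exact Nat.le_findGreatest (le_of_lt this) hi
    -- the climb
    set j : ℕ → ℕ := fun k => Nat.rec 0 (fun _ jk => Lv (f jk) + 1) k with hj
    have hjsucc : ∀ k, j (k+1) = Lv (f (j k)) + 1 := fun k => rfl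
    have hjlt : ∀ k, j k < j (k+1) := by
      intro k
      rw [hjsucc]
      exact Nat.lt_succ_of_le (hLub (j k) (j k) rfl)
    have hjmono : StrictMono j := strictMono_nat_of_lt_succ hjlt
    have hrealstep : ∀ k, r (f (j k)) (f (j (k+1))) := by
      intro k
      generalize hL : Lv (f (j k)) = L at *
      have e : f L = f (j k) := by rw [← hL]; exact hLmem (j k)
      rcases hf L with hs | hc
      · rw [hjsucc, hL, ← e]
        exact hs
      · exfalso
        have h1 : f (max (Nb (f L)) L) = f L := hc _ (le_max_right _ _)
        exact hNb (f L) _ (le_max_left _ _) h1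
    refine ⟨fun k => f (j k), fun k => Or.inl (hrealstep k), ?_, ?_, ?_⟩
    · -- injectivity gives determinism
      have hinj : ∀ k m, k < m → f (j k) ≠ f (j m) := by
        intro k m hkm heq
        have h1 : j m ≤ Lv (f (j k)) := hLub (j k) (j m) heq.symm
        have h2 : j (k+1) ≤ j m := hjmono.le_iff_le.mpr hkm
        rw [hjsucc] at h2
        omega
      intro k m heq
      rcases lt_trichotomy k m with h | h | h
      · exact absurd heq (hinj k m h)
      · rw [h]
      · exact absurd heq.symm (hinj m k h)
    · intro x hx
      obtain ⟨i, hi⟩ := convcof x hx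
      refine ⟨i, hi.trans (redseq_rtg hf i (j i) ?_)⟩
      exact hjmono.le_apply
    · intro k
      exact conv_symm (rtg_conv (hall (j k)))
end Stmt14Aux

namespace Stmt14Aux
variable {A : Type} {r : A → A → Prop}

lemma key (hcp : CP r) :
    ∃ r₀ : A → A → Prop,
      (∀ x y, r₀ x y → r x y) ∧
      (∀ x y z, r₀ x y → r₀ x z → y = z) ∧
      (∀ b c, Conv r b c → ∃ d, Relation.ReflTransGen r₀ b d ∧ Relation.ReflTransGen r₀ c d) := by
  classical
  -- representative of each conversion class
  let st : Setoid A := ⟨Conv r, conv_equivalence⟩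
  let rep : A → A := fun x => (@Quotient.mk A st x).out
  have hrep1 : ∀ x, Conv r x (rep x) := fun x => conv_symm (@Quotient.mk_out A st x)
  have hrep2 : ∀ x y, Conv r x y → rep x = rep y := by
    intro x y h
    show (@Quotient.mk A st x).out = (@Quotient.mk A st y).out
    rw [Quotient.sound (s := st) h]
  choose gOf hg1 hg2 hg3 hg4 using fun a : A => trunk_exists hcp a
  -- the trunk attached to each point
  obtain ⟨T, hT1, hT2, hT3, hTconv, hT4⟩ :
      ∃ T : A → ℕ → A,
        (∀ x k, r (T x k) (T x (k+1)) ∨ T x (k+1) = T x k) ∧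
        (∀ x k m, T x k = T x m → T x (k+1) = T x (m+1)) ∧
        (∀ x, ∃ k, ReflTransGen r x (T x k)) ∧
        (∀ x y, Conv r x y → T x = T y) ∧
        (∀ x k, Conv r (T x k) x) := by
    refine ⟨fun x => gOf (rep x), fun x => hg1 (rep x), fun x => hg2 (rep x),
      fun x => hg3 (rep x) x (hrep1 x), ?_, ?_⟩
    · intro x y h; show gOf (rep x) = gOf (rep y); rw [hrep2 x y h]
    · intro x k
      exact ((hg4 (rep x) k).trans (conv_symm (hrep1 x)))
  have hTfix : ∀ x k, T (T x k) = T x := fun x k => hTconv _ _ (hT4 x k)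
  -- minimal trunk index reachable
  have hex : ∀ x, ∃ k, (ReflTransGen r x (T x k)) ∧ ∀ k', ReflTransGen r x (T x k') → k ≤ k' :=
    fun x => ⟨Nat.find (hT3 x), Nat.find_spec (hT3 x), fun k' h => Nat.find_min' (hT3 x) h⟩
  choose n hn hnmin using hex
  -- minimal path length to it
  have hexlen : ∀ x, ∃ m, (rPow r m x (T x (n x))) ∧ ∀ m', rPow r m' x (T x (n x)) → m ≤ m' := by
    intro x
    have h := rtg_rPow (hn x)
    exact ⟨Nat.find h, Nat.find_spec h, fun m' hm' => Nat.find_min' h hm'⟩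
  choose len hlen hlenmin using hexlen
  -- the successor function
  have hsex : ∀ x, ∃ z,
      ((∃ k, T x k = x) → ∃ k, T x k = x ∧ z = T x (k+1)) ∧
      ((¬ ∃ k, T x k = x) → r x z ∧ rPow r (len x - 1) z (T x (n x))) := by
    intro x
    by_cases h : ∃ k, T x k = x
    · obtain ⟨k, hk⟩ := h
      exact ⟨T x (k+1), fun _ => ⟨k, hk, rfl⟩, fun h' => absurd ⟨k, hk⟩ h'⟩
    · have hlen0 : len x ≠ 0 := by
        intro h0
        have := hlen x
        rw [h0] at this
        exact h ⟨n x, this.symm⟩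
      have : len x = (len x - 1) + 1 := (Nat.succ_pred_eq_of_pos (Nat.pos_of_ne_zero hlen0)).symm
      have hl := hlen x
      rw [this] at hl
      obtain ⟨z, hxz, hz⟩ := hl
      exact ⟨z, fun h' => absurd h' h, fun _ => ⟨hxz, hz⟩⟩
  choose s hs1 hs2 using hsex
  refine ⟨fun x y => r x y ∧ y = s x, fun x y h => h.1, fun x y z h1 h2 => by rw [h1.2, h2.2], ?_⟩
  set r₀ : A → A → Prop := fun x y => r x y ∧ y = s x with hr₀
  -- climbing the trunk
  have climb : ∀ x k m, k ≤ m → ReflTransGen r₀ (T x k) (T x m) := by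
    intro x k m hkm
    induction m, hkm using Nat.le_induction with
    | base => exact .refl
    | succ m _ ih =>
      rcases hT1 x m with hs | hsEq
      · refine ih.tail ⟨hs, ?_⟩
        have hontr : ∃ k', T (T x m) k' = T x m := ⟨m, by rw [hTfix]⟩
        obtain ⟨k', hk', hsk'⟩ := hs1 (T x m) hontr
        rw [hTfix] at hk' hsk'
        rw [hsk', hT2 x k' m hk']
      · rw [hsEq]; exact ih
  -- every point reaches its trunk via r₀
  have wf : WellFounded (Prod.Lex (· < · : ℕ → ℕ → Prop) (· < · : ℕ → ℕ → Prop)) :=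
    WellFounded.prod_lex (Nat.lt_wfRel.wf) (Nat.lt_wfRel.wf)
  have reach : ∀ x, ∃ k, ReflTransGen r₀ x (T x k) := by
    have main : ∀ p : ℕ × ℕ, ∀ x, (n x, len x) = p → ∃ k, ReflTransGen r₀ x (T x k) := by
      intro p
      induction p using wf.induction with
      | _ p IH =>
        intro x hx
        by_cases h : ∃ k, T x k = x
        · obtain ⟨k, hk⟩ := h
          exact ⟨k, by rw [hk]⟩
        · obtain ⟨hrxz, hzpath⟩ := hs2 x h
          set z := s x with hz
          have hT_z : T z = T x := hTconv z x (conv_symm (ReflTransGen.single (Or.inl hrxz)))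
          have hnz : n z ≤ n x := by
            apply hnmin z
            rw [hT_z]
            exact rPow_rtg _ _ _ hzpath
          have hlenx : len x ≠ 0 := by
            intro h0
            have := hlen x
            rw [h0] at this
            exact h ⟨n x, this.symm⟩
          have hlex : Prod.Lex (· < ·) (· < ·) (n z, len z) (n x, len x) := by
            rcases lt_or_eq_of_le hnz with hlt | heq
            · exact Prod.Lex.left _ _ hlt
            · have hlz : len z ≤ len x - 1 := by
                apply hlenmin z
                rw [hT_z, heq]
                exact hzpath
              have : len z < len x := lt_of_le_of_lt hlz (Nat.pred_lt hlenx)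
              rw [heq]
              exact Prod.Lex.right _ this
            
          obtain ⟨k, hk⟩ := IH (n z, len z) (hx ▸ hlex) z rfl
          rw [hT_z] at hk
          exact ⟨k, ReflTransGen.head ⟨hrxz, rfl⟩ hk⟩
    exact fun x => main (n x, len x) x rfl
  -- meeting of convertible points
  intro b c hbc
  obtain ⟨k, hbk⟩ := reach b
  obtain ⟨m, hcm⟩ := reach c
  have hTbc : T b = T c := hTconv b c hbc
  refine ⟨T b (max k m), hbk.trans (climb b k (max k m) (le_max_left _ _)), ?_⟩
  rw [hTbc] at hbk ⊢
  exact hcm.trans (climb c m (max k m) (le_max_right _ _))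

end Stmt14Aux


/-- every ARS with the cofinality property is DCR₂. -/
theorem stmt14 (A : Type) (hA : Nonempty A) (r : A → A → Prop) (hcp : CP r) :
    ∃ r₀ r₁ : A → A → Prop,
      (∀ x y, r x y ↔ r₀ x y ∨ r₁ x y) ∧
      LocallyDecreasing (I := Fin 2) (· < ·) ![r₀, r₁] := by
  obtain ⟨r₀, hsub, hdet, hmeet⟩ := Stmt14Aux.key hcp
  refine ⟨r₀, r, fun x y => ⟨fun h => Or.inr h, fun h => h.elim (hsub x y) id⟩, ?_⟩
  have hM0 : (![r₀, r] : Fin 2 → A → A → Prop) 0 = r₀ := rfl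
  have hM1 : (![r₀, r] : Fin 2 → A → A → Prop) 1 = r := rfl
  have hb1 : ∀ x y, Below (· < ·) (![r₀, r] : Fin 2 → A → A → Prop) 1 x y ↔ r₀ x y := by
    intro x y
    constructor
    · rintro ⟨γ, hγ, h⟩
      fin_cases γ
      · exact h
      · exact absurd hγ (by decide)
    · intro h
      exact ⟨0, by norm_num, h⟩
  intro α β a b c hb hc
  have h2 : ∀ γ : Fin 2, γ = 0 ∨ γ = 1 := by decide
  have mkconv : ∀ {b c : A}, r a b → r a c → Conv r b c := fun hb hc =>
    ReflTransGen.head (Or.inr hb) (ReflTransGen.single (Or.inl hc))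
  rcases h2 α with rfl | rfl <;> rcases h2 β with rfl | rfl
  · -- (0,0) : determinism
    rw [hM0] at hb hc
    have : b = c := hdet a b c hb hc
    subst this
    exact ⟨b, b, b, b, b, .refl, Or.inr rfl, .refl, .refl, Or.inr rfl, .refl⟩
  · -- α = 0, β = 1
    rw [hM0] at hb; rw [hM1] at hc
    have hconv : Conv r b c := mkconv (hsub _ _ hb) hc
    obtain ⟨d, hbd, hcd⟩ := hmeet b c hconv
    refine ⟨b, b, d, d, d, .refl, Or.inr rfl, ?_, ?_, Or.inr rfl, .refl⟩
    · exact ReflTransGen.mono (fun x y h => Or.inr ((hb1 x y).mpr h)) _ _ hbd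
    · exact ReflTransGen.mono (fun x y h => (hb1 x y).mpr h) _ _ hcd
  · -- α = 1, β = 0
    rw [hM1] at hb; rw [hM0] at hc
    have hconv : Conv r b c := mkconv hb (hsub _ _ hc)
    obtain ⟨d, hbd, hcd⟩ := hmeet b c hconv
    refine ⟨d, d, c, c, d, ?_, Or.inr rfl, .refl, .refl, Or.inr rfl, ?_⟩
    · exact ReflTransGen.mono (fun x y h => (hb1 x y).mpr h) _ _ hbd
    · exact ReflTransGen.mono (fun x y h => Or.inl ((hb1 x y).mpr h)) _ _ hcd
  · -- (1,1)
    rw [hM1] at hb hc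
    have hconv : Conv r b c := mkconv hb hc
    obtain ⟨d, hbd, hcd⟩ := hmeet b c hconv
    refine ⟨d, d, d, d, d, ?_, Or.inr rfl, .refl, ?_, Or.inr rfl, .refl⟩
    · exact ReflTransGen.mono (fun x y h => (hb1 x y).mpr h) _ _ hbd
    · exact ReflTransGen.mono (fun x y h => (hb1 x y).mpr h) _ _ hcd
end

section
/- Every countable confluent ARS is DCR₂: if (A,→) is an ARS, there is a surjection from ℕ onto A, and → is confluent, then there exist relations →₀ and →₁ on A with → = →₀ ∪ →₁ such that every peak c ←_β a →_α b with α,β ∈ {0,1} joins decreasingly over the order 0 < 1 (there exist d, b', b'', c', c'' with b ↠_{<α} b', b' →^=_β b'', b'' ↠_{(<α)∪(<β)} d and c ↠_{<β} c', c' →^=_α c'', c'' ↠_{(<α)∪(<β)} d). -/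
open Relation Function FirstOrder

namespace Stmt15

open Relation

variable {A : Type} {r : A → A → Prop}

lemma conv_symm {x y : A} (h : Conv r x y) : Conv r y x :=
  (@ReflTransGen.symmetric _ _ ⟨fun _ _ h => h.symm⟩).symm _ _ h

lemma conv_trans {x y z : A} (h : Conv r x y) (h' : Conv r y z) : Conv r x z := h.trans h'

lemma conv_of_rtg {x y : A} (h : ReflTransGen r x y) : Conv r x y :=
  ReflTransGen.mono (fun _ _ h => Or.inl h) _ _ h

lemma conv_of_step {x y : A} (h : r x y) : Conv r x y :=
  ReflTransGen.single (Or.inl h)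

lemma cr (hconf : Confluent r) {x y : A} (h : Conv r x y) :
    ∃ d, ReflTransGen r x d ∧ ReflTransGen r y d := by
  induction h with
  | refl => exact ⟨x, .refl, .refl⟩
  | tail hxz hstep ih =>
    obtain ⟨d, hxd, hzd⟩ := ih
    rcases hstep with hzy | hyz
    · obtain ⟨e, hye, hde⟩ := hconf _ _ _ (ReflTransGen.single hzy) hzd
      exact ⟨e, hxd.trans hde, hye⟩
    · exact ⟨d, hxd, (ReflTransGen.single hyz).trans hzd⟩

/-- chains of length exactly `n` -/
def chainN (r : A → A → Prop) : ℕ → A → A → Prop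
  | 0, x, y => x = y
  | n+1, x, z => ∃ y, r x y ∧ chainN r n y z

lemma chainN_of_rtg {x y : A} (h : ReflTransGen r x y) : ∃ n, chainN r n x y := by
  induction h with
  | refl => exact ⟨0, rfl⟩
  | tail _ hstep ih =>
    obtain ⟨n, hn⟩ := ih
    refine ⟨n + 1, ?_⟩
    clear * - hn hstep
    induction n generalizing x with
    | zero => cases hn; exact ⟨_, hstep, rfl⟩
    | succ n ih => obtain ⟨w, hw, hc⟩ := hn; exact ⟨w, hw, ih hc⟩

section Comp

open scoped Classical

variable (r : A → A → Prop) (hconf : Confluent r) (g : ℕ → A) (a : A)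

noncomputable def joinPt (x y : A) : A :=
  if h : Conv r x y then (cr hconf h).choose else x

lemma joinPt_spec₁ {x y : A} (h : Conv r x y) :
    ReflTransGen r x (joinPt r hconf x y) := by
  rw [joinPt, dif_pos h]; exact (cr hconf h).choose_spec.1

lemma joinPt_spec₂ {x y : A} (h : Conv r x y) :
    ReflTransGen r y (joinPt r hconf x y) := by
  rw [joinPt, dif_pos h]; exact (cr hconf h).choose_spec.2

noncomputable def T : ℕ → A
  | 0 => a
  | n+1 => if Conv r (T n) (g n) then joinPt r hconf (T n) (g n) else T n

lemma T_step (n : ℕ) : ReflTransGen r (T r hconf g a n) (T r hconf g a (n+1)) := by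
  rw [T]
  split_ifs with h
  · exact joinPt_spec₁ r hconf h
  · exact .refl

lemma T_from_a (n : ℕ) : ReflTransGen r a (T r hconf g a n) := by
  induction n with
  | zero => exact .refl
  | succ n ih => exact ih.trans (T_step r hconf g a n)

lemma T_mono {n k : ℕ} (h : n ≤ k) :
    ReflTransGen r (T r hconf g a n) (T r hconf g a k) := by
  induction h with
  | refl => exact .refl
  | step _ ih => exact ih.trans (T_step r hconf g a _)

lemma T_absorb (n : ℕ) (h : Conv r a (g n)) :
    ReflTransGen r (g n) (T r hconf g a (n+1)) := by
  have hc : Conv r (T r hconf g a n) (g n) :=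
    conv_trans (conv_symm (conv_of_rtg (T_from_a r hconf g a n))) h
  rw [T, if_pos hc]
  exact joinPt_spec₂ r hconf hc

lemma T_cofinal (hg : Function.Surjective g) {x : A} (h : Conv r a x) :
    ∃ n, ReflTransGen r x (T r hconf g a n) := by
  obtain ⟨n, rfl⟩ := hg x
  exact ⟨n + 1, T_absorb r hconf g a n h⟩

end Comp

section Flatten

variable (r : A → A → Prop) (hconf : Confluent r) (g : ℕ → A) (a : A)

noncomputable def L (n : ℕ) : List A :=
  T r hconf g a n ::
    (List.exists_isChain_cons_of_relationReflTransGen (T_step r hconf g a n)).choose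

lemma L_ne_nil (n : ℕ) : L r hconf g a n ≠ [] := by simp [L]

lemma L_headI (n : ℕ) : @List.headI A ⟨a⟩ (L r hconf g a n) = T r hconf g a n := rfl

lemma L_chain' (n : ℕ) : (L r hconf g a n).Chain' r :=
  (List.exists_isChain_cons_of_relationReflTransGen (T_step r hconf g a n)).choose_spec.1

lemma L_getLast (n : ℕ) :
    (L r hconf g a n).getLast (L_ne_nil r hconf g a n) = T r hconf g a (n+1) :=
  (List.exists_isChain_cons_of_relationReflTransGen (T_step r hconf g a n)).choose_spec.2

noncomputable def st : ℕ → ℕ × List A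
  | 0 => (0, L r hconf g a 0)
  | k+1 =>
    match st k with
    | (n, _ :: y :: rest) => (n, y :: rest)
    | (n, _) => (n+1, L r hconf g a (n+1))

lemma st_inv (k : ℕ) :
    (st r hconf g a k).2 ≠ [] ∧ (st r hconf g a k).2 <:+ L r hconf g a (st r hconf g a k).1 := by
  induction k with
  | zero => exact ⟨L_ne_nil r hconf g a 0, List.suffix_refl _⟩
  | succ k ih =>
    rw [st]
    rcases hst : st r hconf g a k with ⟨n, l⟩
    match l with
    | [] => exact ⟨L_ne_nil r hconf g a _, List.suffix_refl _⟩
    | [x] => exact ⟨L_ne_nil r hconf g a _, List.suffix_refl _⟩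
    | x :: y :: rest =>
      refine ⟨by simp, ?_⟩
      have := ih.2
      rw [hst] at this
      exact (List.suffix_cons x (y :: rest)).trans this

noncomputable def mseq (k : ℕ) : A :=
  @List.headI A ⟨a⟩ (st r hconf g a k).2

end Flatten

section MSeq

variable (r : A → A → Prop) (hconf : Confluent r) (g : ℕ → A) (a : A)

lemma getLast_of_suffix {α : Type*} {l : List α} {x : α} (h : [x] <:+ l) (hne : l ≠ []) :
    l.getLast hne = x := by
  obtain ⟨p, rfl⟩ := h
  exact List.getLast_append_singleton p

lemma mseq_step (k : ℕ) :
    r (mseq r hconf g a k) (mseq r hconf g a (k+1)) ∨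
      mseq r hconf g a (k+1) = mseq r hconf g a k := by
  have hinv := st_inv r hconf g a k
  rcases hst : st r hconf g a k with ⟨n, l⟩
  rw [hst] at hinv
  match l, hinv with
  | [x], hinv =>
    have hx : x = (L r hconf g a n).getLast (L_ne_nil r hconf g a n) :=
      (getLast_of_suffix (by simpa using hinv.2) _).symm
    right
    have h1 : mseq r hconf g a (k+1) = @List.headI A ⟨a⟩ (L r hconf g a (n+1)) := by
      rw [mseq, st, hst]
    have h2 : mseq r hconf g a k = x := by rw [mseq, hst]; rfl
    rw [h1, h2, L_headI, hx, L_getLast]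
  | x :: y :: rest, hinv =>
    left
    have h1 : mseq r hconf g a (k+1) = y := by rw [mseq, st, hst]; rfl
    have h2 : mseq r hconf g a k = x := by rw [mseq, hst]; rfl
    have hc : List.Chain' r (x :: y :: rest) :=
      (L_chain' r hconf g a n).suffix hinv.2
    rw [h1, h2]
    exact (List.isChain_cons_cons.mp hc).1

lemma st_advance : ∀ (l : List A) (n k : ℕ), st r hconf g a k = (n, l) →
    ∃ j, st r hconf g a j = (n+1, L r hconf g a (n+1))
  | [], n, k, h => ⟨k+1, by rw [st, h]⟩
  | [x], n, k, h => ⟨k+1, by rw [st, h]⟩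
  | x :: y :: rest, n, k, h => by
    have : st r hconf g a (k+1) = (n, y :: rest) := by rw [st, h]
    exact st_advance (y :: rest) n (k+1) this

lemma mseq_T (n : ℕ) : ∃ k, mseq r hconf g a k = T r hconf g a n := by
  have h : ∃ k, st r hconf g a k = (n, L r hconf g a n) := by
    induction n with
    | zero => exact ⟨0, by rw [st]⟩
    | succ n ih =>
      obtain ⟨k, hk⟩ := ih
      exact st_advance r hconf g a _ n k hk
  obtain ⟨k, hk⟩ := h
  exact ⟨k, by rw [mseq, hk, L_headI]⟩

lemma mseq_zero : mseq r hconf g a 0 = a := by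
  rw [mseq, st, L_headI]; rfl

lemma mseq_mono {i j : ℕ} (h : i ≤ j) :
    ReflTransGen r (mseq r hconf g a i) (mseq r hconf g a j) := by
  induction h with
  | refl => exact .refl
  | step _ ih =>
    rcases mseq_step r hconf g a ‹_› with hs | he
    · exact ih.trans (ReflTransGen.single hs)
    · rwa [he]

lemma mseq_from_a (k : ℕ) : ReflTransGen r a (mseq r hconf g a k) := by
  have := mseq_mono r hconf g a (Nat.zero_le k)
  rwa [mseq_zero] at this

lemma mseq_cofinal (hg : Function.Surjective g) {x : A} (h : Conv r a x) :
    ∃ k, ReflTransGen r x (mseq r hconf g a k) := by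
  obtain ⟨n, hn⟩ := T_cofinal r hconf g a hg h
  obtain ⟨k, hk⟩ := mseq_T r hconf g a n
  exact ⟨k, hk ▸ hn⟩

end MSeq

section Build

variable (r : A → A → Prop) (g : ℕ → A)

lemma exists_good_component (hconf : Confluent r) (hg : Function.Surjective g) (a : A) :
    ∃ s : A → A → Prop,
      (∀ x y, s x y → r x y ∧ Conv r a x) ∧
      (∀ x y z, s x y → s x z → y = z) ∧
      (∀ x y, Conv r a x → Conv r a y →
        ∃ d, Relation.ReflTransGen s x d ∧ Relation.ReflTransGen s y d) := by
  classical
  by_cases hA : ∃ v, Conv r a v ∧ ∀ x, Conv r a x → ReflTransGen r x v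
  · -- Case A: the component has a cofinal single point `v`
    obtain ⟨v, hva, hv⟩ := hA
    set D : A → ℕ := fun x => sInf {n | chainN r n x v} with hD
    have descent : ∀ x, Conv r a x ∧ x ≠ v →
        ∃ y, r x y ∧ Conv r a y ∧ D y < D x := by
      rintro x ⟨hconv, hne⟩
      have hnonempty : {n | chainN r n x v}.Nonempty := chainN_of_rtg (hv x hconv)
      have hmem : chainN r (D x) x v := Nat.sInf_mem hnonempty
      rcases hDx : D x with _ | n
      · rw [hDx] at hmem; exact absurd hmem hne
      · rw [hDx] at hmem
        obtain ⟨y, hxy, hyc⟩ := hmem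
        refine ⟨y, hxy, (conv_trans hconv (conv_of_step hxy)), ?_⟩
        have : D y ≤ n := Nat.sInf_le hyc
        omega
    choose! dsc hd1 hd2 hd3 using descent
    refine ⟨fun x y => (Conv r a x ∧ x ≠ v) ∧ y = dsc x, ?_, ?_, ?_⟩
    · rintro x y ⟨hx, rfl⟩; exact ⟨hd1 x hx, hx.1⟩
    · rintro x y z ⟨_, rfl⟩ ⟨_, rfl⟩; rfl
    · have orbit : ∀ n x, D x < n → Conv r a x →
          ReflTransGen (fun x y => (Conv r a x ∧ x ≠ v) ∧ y = dsc x) x v := by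
        intro n
        induction n with
        | zero => omega
        | succ n ih =>
          intro x hlt hconv
          by_cases hx : x = v
          · subst hx; exact .refl
          · exact ReflTransGen.head ⟨⟨hconv, hx⟩, rfl⟩
              (ih _ (by have := hd3 x ⟨hconv, hx⟩; omega) (hd2 x ⟨hconv, hx⟩))
      intro x y hx hy
      exact ⟨v, orbit (D x + 1) x (by omega) hx, orbit (D y + 1) y (by omega) hy⟩
  · -- Case B: build the injective cofinal spine
    have hfin : ∀ k, ∃ N, ∀ ℓ, mseq r hconf g a ℓ = mseq r hconf g a k → ℓ ≤ N := by
      intro k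
      by_contra hcon
      push_neg at hcon
      refine hA ⟨mseq r hconf g a k, conv_of_rtg (mseq_from_a r hconf g a k), ?_⟩
      intro x hx
      obtain ⟨i, hi⟩ := mseq_cofinal r hconf g a hg hx
      obtain ⟨ℓ, hℓ, hiℓ⟩ := hcon i
      exact hi.trans ((mseq_mono r hconf g a (le_of_lt hiℓ)).trans (hℓ ▸ ReflTransGen.refl))
    choose! bnd hbnd using hfin
    set lo : ℕ → ℕ := fun k =>
      Nat.findGreatest (fun ℓ => mseq r hconf g a ℓ = mseq r hconf g a k) (bnd k) with hlo
    have hlo1 : ∀ k, k ≤ lo k := fun k => Nat.le_findGreatest (hbnd k k rfl) rfl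
    have hlo2 : ∀ k, mseq r hconf g a (lo k) = mseq r hconf g a k := fun k =>
      Nat.findGreatest_spec (P := fun ℓ => mseq r hconf g a ℓ = mseq r hconf g a k)
        (hbnd k k rfl) rfl
    have hlo3 : ∀ k ℓ, mseq r hconf g a ℓ = mseq r hconf g a k → ℓ ≤ lo k := by
      intro k ℓ h
      rcases le_or_gt ℓ (bnd k) with hle | hgt
      · by_contra hgt2
        exact Nat.findGreatest_is_greatest (lt_of_not_ge hgt2) hle h
      · exact absurd (hbnd k ℓ h) (by omega)
    set J : ℕ → ℕ := fun k => Nat.rec 0 (fun _ jk => lo jk + 1) k with hJ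
    have hJsucc : ∀ k, J (k + 1) = lo (J k) + 1 := fun k => rfl
    have hJmono : StrictMono J := by
      apply strictMono_nat_of_lt_succ
      intro k
      rw [hJsucc]
      have := hlo1 (J k)
      omega
    set M : ℕ → A := fun k => mseq r hconf g a (J k) with hM
    have M_step : ∀ k, r (M k) (M (k + 1)) := by
      intro k
      rcases mseq_step r hconf g a (lo (J k)) with hs | he
      · have h2 := hlo2 (J k)
        show r (mseq r hconf g a (J k)) (mseq r hconf g a (J (k + 1)))
        rw [hJsucc]
        rwa [h2] at hs
      · exfalso
        have : lo (J k) + 1 ≤ lo (J k) :=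
          hlo3 (J k) _ (he.trans (hlo2 (J k)))
        omega
    have M_inj : Function.Injective M := by
      have key : ∀ i k, i < k → M i ≠ M k := by
        intro i k hik heq
        have h1 : J k ≤ lo (J i) := hlo3 (J i) (J k) heq.symm
        have h2 : J (i + 1) ≤ J k := hJmono.monotone (Nat.succ_le_of_lt hik)
        have h3 : J (i + 1) = lo (J i) + 1 := hJsucc i
        omega
      intro i k heq
      rcases lt_trichotomy i k with h | h | h
      · exact absurd heq (key i k h)
      · exact h
      · exact absurd heq.symm (key k i h)
    have M_cof : ∀ x, Conv r a x → ∃ k, ReflTransGen r x (M k) := by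
      intro x hx
      obtain ⟨i, hi⟩ := mseq_cofinal r hconf g a hg hx
      exact ⟨i, hi.trans (mseq_mono r hconf g a (hJmono.le_apply))⟩
    have M_conv : ∀ k, Conv r a (M k) := fun k => conv_of_rtg (mseq_from_a r hconf g a _)
    set V : A → Prop := fun x => ∃ k, M k = x with hV
    set pos : A → ℕ := fun x => sInf {k | M k = x} with hpos
    have M_pos : ∀ x, V x → M (pos x) = x := fun x hx => Nat.sInf_mem hx
    have pos_M : ∀ k, pos (M k) = k := by
      intro k
      exact M_inj (M_pos (M k) ⟨k, rfl⟩)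
    set D : A → ℕ := fun x => sInf {n | ∃ z, V z ∧ chainN r n x z} with hDD
    have descent : ∀ x, Conv r a x ∧ ¬ V x →
        ∃ y, r x y ∧ Conv r a y ∧ D y < D x := by
      rintro x ⟨hconv, hnv⟩
      have hnonempty : {n | ∃ z, V z ∧ chainN r n x z}.Nonempty := by
        obtain ⟨k, hk⟩ := M_cof x hconv
        obtain ⟨n, hn⟩ := chainN_of_rtg hk
        exact ⟨n, M k, ⟨k, rfl⟩, hn⟩
      have hmem : ∃ z, V z ∧ chainN r (D x) x z := Nat.sInf_mem hnonempty
      obtain ⟨z, hVz, hchain⟩ := hmem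
      rcases hDx : D x with _ | n
      · rw [hDx] at hchain; exact absurd (hchain ▸ hVz) hnv
      · rw [hDx] at hchain
        obtain ⟨y, hxy, hyc⟩ := hchain
        refine ⟨y, hxy, conv_trans hconv (conv_of_step hxy), ?_⟩
        have : D y ≤ n := Nat.sInf_le ⟨z, hVz, hyc⟩
        omega
    choose! dsc hd1 hd2 hd3 using descent
    set s : A → A → Prop := fun x y =>
      Conv r a x ∧ r x y ∧ y = (if V x then M (pos x + 1) else dsc x) with hs
    refine ⟨s, ?_, ?_, ?_⟩
    · rintro x y ⟨hc, hr, _⟩; exact ⟨hr, hc⟩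
    · rintro x y z ⟨_, _, rfl⟩ ⟨_, _, rfl⟩; rfl
    · have orbit2 : ∀ k i, ReflTransGen s (M k) (M (k + i)) := by
        intro k i
        induction i with
        | zero => exact .refl
        | succ i ih =>
          refine ih.tail ?_
          refine ⟨M_conv _, M_step _, ?_⟩
          rw [if_pos (⟨k + i, rfl⟩ : V (M (k + i))), pos_M]
          rfl
      have orbit1 : ∀ n x, D x < n → Conv r a x → ∃ k, ReflTransGen s x (M k) := by
        intro n
        induction n with
        | zero => omega
        | succ n ih =>
          intro x hlt hconv
          by_cases hx : V x
          · exact ⟨pos x, by rw [M_pos x hx]⟩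
          · obtain ⟨k, hk⟩ := ih (dsc x) (by have := hd3 x ⟨hconv, hx⟩; omega)
              (hd2 x ⟨hconv, hx⟩)
            exact ⟨k, ReflTransGen.head
              ⟨hconv, hd1 x ⟨hconv, hx⟩, by rw [if_neg hx]⟩ hk⟩
      intro x y hx hy
      obtain ⟨kx, hkx⟩ := orbit1 (D x + 1) x (by omega) hx
      obtain ⟨ky, hky⟩ := orbit1 (D y + 1) y (by omega) hy
      refine ⟨M (max kx ky), hkx.trans ?_, hky.trans ?_⟩
      · have := orbit2 kx (max kx ky - kx)
        rwa [show kx + (max kx ky - kx) = max kx ky by omega] at this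
      · have := orbit2 ky (max kx ky - ky)
        rwa [show ky + (max kx ky - ky) = max kx ky by omega] at this

end Build

section Glue

variable (r : A → A → Prop) (g : ℕ → A)

lemma exists_good (hconf : Confluent r) (hg : Function.Surjective g) :
    ∃ s : A → A → Prop,
      (∀ x y, s x y → r x y) ∧
      (∀ x y z, s x y → s x z → y = z) ∧
      (∀ x y, Conv r x y → ∃ d, Relation.ReflTransGen s x d ∧ Relation.ReflTransGen s y d) := by
  classical
  choose S hsub hdet hmeet using fun a => exists_good_component r g hconf hg a
  set rep : A → A := fun x => g (sInf {n | Conv r x (g n)}) with hrepdef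
  have hrepne : ∀ x : A, {n | Conv r x (g n)}.Nonempty := by
    intro x
    obtain ⟨n, hn⟩ := hg x
    exact ⟨n, hn ▸ ReflTransGen.refl⟩
  have hrep1 : ∀ x, Conv r x (rep x) := fun x => Nat.sInf_mem (hrepne x)
  have hrep2 : ∀ x y, Conv r x y → rep x = rep y := by
    intro x y hxy
    have : {n | Conv r x (g n)} = {n | Conv r y (g n)} := by
      ext n
      exact ⟨fun h => conv_trans (conv_symm hxy) h, fun h => conv_trans hxy h⟩
    rw [hrepdef]
    simp only [this]
  set s : A → A → Prop := fun x y => S (rep x) x y with hsdef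
  have transfer : ∀ (ρ : A) (z d : A), ReflTransGen (S ρ) z d → rep z = ρ →
      ReflTransGen s z d := by
    intro ρ z d h
    induction h using ReflTransGen.head_induction_on with
    | refl => intro _; exact .refl
    | head hzc _ ih =>
      intro hz
      rename_i z' c' _
      have hc : rep c' = ρ := by
        have h1 := (hsub ρ _ _ hzc).1
        rw [← hz, ← hrep2 z' c' (conv_of_step h1)]
      exact ReflTransGen.head (show s z' c' by rw [hsdef]; simp only [hz]; exact hzc) (ih hc)
  refine ⟨s, ?_, ?_, ?_⟩
  · intro x y hxy; exact (hsub (rep x) x y hxy).1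
  · intro x y z h1 h2; exact hdet (rep x) x y z h1 h2
  · intro x y hxy
    have hry : rep y = rep x := (hrep2 x y hxy).symm
    have h1 : Conv r (rep x) x := conv_symm (hrep1 x)
    have h2 : Conv r (rep x) y := by rw [← hry]; exact conv_symm (hrep1 y)
    obtain ⟨d, hxd, hyd⟩ := hmeet (rep x) x y h1 h2
    exact ⟨d, transfer (rep x) x d hxd rfl, transfer (rep x) y d hyd hry⟩

end Glue

end Stmt15

namespace Stmt15

variable {A : Type} {r₀ r₁ : A → A → Prop}

lemma below_zero {x y : A} (h : Below (· < · : Fin 2 → Fin 2 → Prop) ![r₀, r₁] 0 x y) : False := by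
  obtain ⟨γ, hγ, _⟩ := h
  rw [Fin.lt_def] at hγ
  simp at hγ

lemma below_one {x y : A} : Below (· < · : Fin 2 → Fin 2 → Prop) ![r₀, r₁] 1 x y ↔ r₀ x y := by
  constructor
  · rintro ⟨γ, hγ, h⟩
    rw [Fin.lt_def] at hγ
    have : γ = 0 := by omega
    subst this
    simpa using h
  · intro h
    exact ⟨0, by decide, by simpa using h⟩

lemma rtg_below_zero {b b' : A}
    (h : Relation.ReflTransGen (Below (· < · : Fin 2 → Fin 2 → Prop) ![r₀, r₁] 0) b b') :
    b' = b := by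
  induction h with
  | refl => rfl
  | tail _ hstep ih => exact absurd hstep below_zero

end Stmt15

/-- every countable confluent ARS is DCR₂. -/
theorem stmt15 (A : Type) (hA : Nonempty A) (r : A → A → Prop)
    (hcount : ∃ g : ℕ → A, Function.Surjective g) (hconf : Confluent r) :
    ∃ r₀ r₁ : A → A → Prop,
      (∀ x y, r x y ↔ r₀ x y ∨ r₁ x y) ∧
      LocallyDecreasing (I := Fin 2) (· < ·) ![r₀, r₁] := by
  classical
  obtain ⟨g, hg⟩ := hcount
  obtain ⟨s, hsub, hdet, hmeet⟩ := Stmt15.exists_good r g hconf hg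
  refine ⟨s, r, fun x y => ⟨fun h => Or.inr h, fun h => h.elim (hsub x y) id⟩, ?_⟩
  intro α β a b c hab hac
  have lift1 : ∀ {x y : A}, Relation.ReflTransGen s x y →
      Relation.ReflTransGen (Below (· < · : Fin 2 → Fin 2 → Prop) ![s, r] 1) x y :=
    fun h => Relation.ReflTransGen.mono (fun _ _ hh => Stmt15.below_one.mpr hh) _ _ h
  have liftu0 : ∀ {x y : A}, Relation.ReflTransGen s x y →
      Relation.ReflTransGen (fun x y =>
        Below (· < · : Fin 2 → Fin 2 → Prop) ![s, r] 1 x y ∨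
        Below (· < · : Fin 2 → Fin 2 → Prop) ![s, r] 0 x y) x y :=
    fun h => Relation.ReflTransGen.mono (fun _ _ hh => Or.inl (Stmt15.below_one.mpr hh)) _ _ h
  have liftu0' : ∀ {x y : A}, Relation.ReflTransGen s x y →
      Relation.ReflTransGen (fun x y =>
        Below (· < · : Fin 2 → Fin 2 → Prop) ![s, r] 0 x y ∨
        Below (· < · : Fin 2 → Fin 2 → Prop) ![s, r] 1 x y) x y :=
    fun h => Relation.ReflTransGen.mono (fun _ _ hh => Or.inr (Stmt15.below_one.mpr hh)) _ _ h
  fin_cases α <;> fin_cases β <;>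
    simp only [Matrix.cons_val_zero, Matrix.cons_val_one, Matrix.head_cons] at hab hac ⊢
  · -- α = 0, β = 0 : both steps are s-steps, determinism
    have : b = c := hdet a b c hab hac
    subst this
    exact ⟨b, b, b, b, b, .refl, Or.inr rfl, .refl, .refl, Or.inr rfl, .refl⟩
  · -- α = 0, β = 1 : b via s, c via r
    have hconv : Conv r b c :=
      Stmt15.conv_trans (Stmt15.conv_symm (Stmt15.conv_of_step (hsub a b hab)))
        (Stmt15.conv_of_step hac)
    obtain ⟨d, hbd, hcd⟩ := hmeet b c hconv
    exact ⟨b, b, d, d, d, .refl, Or.inr rfl, liftu0' hbd, lift1 hcd, Or.inr rfl, .refl⟩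
  · -- α = 1, β = 0 : b via r, c via s
    have hconv : Conv r b c :=
      Stmt15.conv_trans (Stmt15.conv_symm (Stmt15.conv_of_step hab))
        (Stmt15.conv_of_step (hsub a c hac))
    obtain ⟨d, hbd, hcd⟩ := hmeet b c hconv
    exact ⟨d, d, c, c, d, lift1 hbd, Or.inr rfl, .refl, .refl, Or.inr rfl, liftu0 hcd⟩
  · -- α = 1, β = 1 : both r-steps
    have hconv : Conv r b c :=
      Stmt15.conv_trans (Stmt15.conv_symm (Stmt15.conv_of_step hab)) (Stmt15.conv_of_step hac)
    obtain ⟨d, hbd, hcd⟩ := hmeet b c hconv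
    exact ⟨d, d, d, d, d, lift1 hbd, Or.inr rfl, .refl, lift1 hcd, Or.inr rfl, .refl⟩
end
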